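/- arXiv:1003.2654 — 6 statements merged into one kernel-verified Lean document; each statement's English description precedes it below -/
import Mathlib

section
/- Let f₁,...,f_M : X → ℝ be functions with ‖f_j‖ ≤ 1 for all j, where ‖g‖² = (1/n)∑_{i=1}^n g(x_i)² for fixed design points x₁,...,x_n. For θ ∈ ℝ^M write f_θ = ∑_j θ_j f_j, |θ|₁ = ∑_j |θ_j|, and M(θ) = #{j : θ_j ≠ 0}. Then for any θ* ∈ ℝ^M \ {0}, any integer k ≥ 1, and any function f, there exists θ ∈ ℝ^M with |θ|₁ = |θ*|₁ and M(θ) ≤ k such that ‖f - f_θ‖² ≤ ‖f - f_{θ*}‖² + |θ*|₁² / min(k, M(θ*)). -/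
/-! Maurey's empirical method. With `S = |θ*|₁`, the vector `f_{θ*}` is the mean of the vectors
`S • sign(θ*_j) • f_j` under the probability weights `|θ*_j| / S`. By the bias–variance identity,
for any `b` some vector `v_j` with positive weight satisfies
`‖b - v_j‖² ≤ ‖b - v̄‖² + ∑ p_j ‖v_j‖²`, where `v̄` is the mean.
Choosing `k` such vectors one at a time gives a mean `v` of `k` of them with
`‖f - v‖² ≤ ‖f - f_{θ*}‖² + S²/k`, and `v = f_θ` for some `θ` with `|θ|₁ = S` and at most `k`
nonzero coordinates. When `M(θ*) ≤ k`, `θ*` itself works. -/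

open Finset

section Maurey

variable {ι : Type*} [Fintype ι] {p : ι → ℝ}

lemma exists_ne_zero_le_sum_mul (hp0 : ∀ j, 0 ≤ p j) (hp1 : ∑ j, p j = 1) (φ : ι → ℝ) :
    ∃ j, p j ≠ 0 ∧ φ j ≤ ∑ i, p i * φ i := by
  have hs : (univ.filter (p · ≠ 0)).Nonempty :=
    nonempty_of_sum_ne_zero (by rw [sum_filter_ne_zero, hp1]; exact one_ne_zero)
  obtain ⟨j, hj, hle⟩ := exists_le_of_sum_le (f := fun j => p j * φ j)
    (g := fun j => p j * ∑ i, p i * φ i) hs (by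
      rw [← sum_mul, sum_filter_of_ne fun _ _ h => left_ne_zero_of_mul h, sum_filter_ne_zero, hp1,
        one_mul])
  have hpj : p j ≠ 0 := (mem_filter.1 hj).2
  exact ⟨j, hpj, le_of_mul_le_mul_left hle ((hp0 j).lt_of_ne' hpj)⟩

variable {E : Type*} [NormedAddCommGroup E] [InnerProductSpace ℝ E]

lemma sum_mul_norm_sub_sq (hp1 : ∑ j, p j = 1) (v : ι → E) (b : E) :
    ∑ j, p j * ‖b - v j‖ ^ 2 =
      ‖b - ∑ j, p j • v j‖ ^ 2 + (∑ j, p j * ‖v j‖ ^ 2 - ‖∑ j, p j • v j‖ ^ 2) := by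
  have hinner : ∑ j, p j * inner ℝ b (v j) = inner ℝ b (∑ j, p j • v j) := by
    simp only [inner_sum, inner_smul_right]
  simp only [norm_sub_sq_real, mul_add, mul_sub, sum_add_distrib, sum_sub_distrib, ← sum_mul, hp1]
  rw [← hinner]
  simp only [mul_left_comm _ (2 : ℝ), ← mul_sum]
  ring

/-- The induction is over all targets `a` at once, so that the last vector can be chosen first. -/
theorem exists_nat_sum_norm_sub_sq_le (hp0 : ∀ j, 0 ≤ p j) (hp1 : ∑ j, p j = 1) (v : ι → E)
    (m : ℕ) (a : E) :
    ∃ N : ι → ℕ, ∑ j, N j = m ∧ (∀ j, N j ≠ 0 → p j ≠ 0) ∧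
      ‖a - ∑ j, (N j : ℝ) • v j‖ ^ 2 ≤
        ‖a - (m : ℝ) • ∑ j, p j • v j‖ ^ 2 + m * ∑ j, p j * ‖v j‖ ^ 2 := by
  classical
  induction m generalizing a with
  | zero => exact ⟨0, by simp, by simp, by simp⟩
  | succ m ih =>
    set u := ∑ j, p j • v j
    set σ := ∑ j, p j * ‖v j‖ ^ 2
    obtain ⟨j, hpj, hj⟩ := exists_ne_zero_le_sum_mul hp0 hp1 fun j => ‖a - (m : ℝ) • u - v j‖ ^ 2
    obtain ⟨N, hNsum, hNsupp, hN⟩ := ih (a - v j)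
    refine ⟨N + Pi.single j 1, ?_, ?_, ?_⟩
    · simp [sum_add_distrib, hNsum]
    · intro i hi
      by_cases hij : i = j
      · exact hij ▸ hpj
      · exact hNsupp i (by simpa [hij] using hi)
    · have hsum : ∑ i, ((N + Pi.single j 1 : ι → ℕ) i : ℝ) • v i = ∑ i, (N i : ℝ) • v i + v j := by
        simp [add_smul, sum_add_distrib, Pi.single_apply]
      have hbias :
          ∑ i, p i * ‖a - (m : ℝ) • u - v i‖ ^ 2 ≤ ‖a - ((m + 1 : ℕ) : ℝ) • u‖ ^ 2 + σ := by
        rw [sum_mul_norm_sub_sq hp1, Nat.cast_succ, add_smul, one_smul, ← sub_sub]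
        linarith [sq_nonneg ‖u‖]
      calc ‖a - ∑ i, ((N + Pi.single j 1 : ι → ℕ) i : ℝ) • v i‖ ^ 2
          = ‖a - v j - ∑ i, (N i : ℝ) • v i‖ ^ 2 := by rw [hsum, sub_sub, add_comm]
        _ ≤ ‖a - v j - (m : ℝ) • u‖ ^ 2 + m * σ := hN
        _ ≤ ‖a - ((m + 1 : ℕ) : ℝ) • u‖ ^ 2 + ((m + 1 : ℕ) : ℝ) * σ := by
          rw [sub_right_comm]
          push_cast at hbias ⊢
          linarith

theorem exists_nat_sum_norm_sub_inv_smul_sq_le (hp0 : ∀ j, 0 ≤ p j) (hp1 : ∑ j, p j = 1)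
    (v : ι → E) {k : ℕ} (hk : 0 < k) (a : E) :
    ∃ N : ι → ℕ, ∑ j, N j = k ∧ (∀ j, N j ≠ 0 → p j ≠ 0) ∧
      ‖a - (k : ℝ)⁻¹ • ∑ j, (N j : ℝ) • v j‖ ^ 2 ≤
        ‖a - ∑ j, p j • v j‖ ^ 2 + (∑ j, p j * ‖v j‖ ^ 2) / k := by
  have hk' : (0 : ℝ) < k := by exact_mod_cast hk
  obtain ⟨N, hNsum, hNsupp, hN⟩ := exists_nat_sum_norm_sub_sq_le hp0 hp1 v k ((k : ℝ) • a)
  refine ⟨N, hNsum, hNsupp, ?_⟩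
  have hrescale : a - (k : ℝ)⁻¹ • ∑ j, (N j : ℝ) • v j =
      (k : ℝ)⁻¹ • ((k : ℝ) • a - ∑ j, (N j : ℝ) • v j) := by
    rw [smul_sub, inv_smul_smul₀ hk'.ne']
  rw [← smul_sub, norm_smul, Real.norm_of_nonneg hk'.le] at hN
  rw [hrescale, norm_smul, mul_pow, Real.norm_of_nonneg (inv_nonneg.2 hk'.le)]
  calc (k : ℝ)⁻¹ ^ 2 * ‖(k : ℝ) • a - ∑ j, (N j : ℝ) • v j‖ ^ 2
      ≤ (k : ℝ)⁻¹ ^ 2 * ((k * ‖a - ∑ j, p j • v j‖) ^ 2 + k * ∑ j, p j * ‖v j‖ ^ 2) := by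
        gcongr
    _ = _ := by field_simp

lemma card_filter_ne_zero_le_sum (N : ι → ℕ) :
    (univ.filter fun j => N j ≠ 0).card ≤ ∑ j, N j :=
  calc (univ.filter fun j => N j ≠ 0).card = ∑ _j ∈ univ.filter fun j => N j ≠ 0, 1 :=
        card_eq_sum_ones _
    _ ≤ ∑ j ∈ univ.filter fun j => N j ≠ 0, N j :=
      sum_le_sum fun _ hj => Nat.one_le_iff_ne_zero.2 (mem_filter.1 hj).2
    _ = ∑ j, N j := sum_filter_ne_zero _

theorem exists_sparse_norm_sub_sq_le (g : ι → E) {B : ℝ} (hg : ∀ j, ‖g j‖ ^ 2 ≤ B) (c : ι → ℝ)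
    (hc : c ≠ 0) (a : E) {k : ℕ} (hk : 0 < k) :
    ∃ θ : ι → ℝ, ∑ j, |θ j| = ∑ j, |c j| ∧ (univ.filter fun j => θ j ≠ 0).card ≤ k ∧
      ‖a - ∑ j, θ j • g j‖ ^ 2 ≤ ‖a - ∑ j, c j • g j‖ ^ 2 + (∑ j, |c j|) ^ 2 * B / k := by
  set S := ∑ j, |c j|
  have hS : 0 < S := by
    obtain ⟨j, hj⟩ := Function.ne_iff.1 hc
    exact sum_pos' (fun j _ => abs_nonneg _) ⟨j, mem_univ _, abs_pos.2 hj⟩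
  set p : ι → ℝ := fun j => |c j| / S
  set v : ι → E := fun j => (S * SignType.sign (c j)) • g j
  have hp0 : ∀ j, 0 ≤ p j := fun j => by positivity
  have hp1 : ∑ j, p j = 1 := by rw [← sum_div, div_self hS.ne']
  have hmean : ∑ j, p j • v j = ∑ j, c j • g j := by
    refine sum_congr rfl fun j _ => ?_
    rw [smul_smul]
    congr 1
    simp only [p]
    field_simp
    exact abs_mul_sign (c j)
  have hvar : ∑ j, p j * ‖v j‖ ^ 2 ≤ S ^ 2 * B := by
    have hterm : ∀ j, p j * ‖v j‖ ^ 2 = S * |c j| * ‖g j‖ ^ 2 := fun j => by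
      simp only [p, v, norm_smul, mul_pow, Real.norm_eq_abs, sq_abs]
      have : |c j| * (SignType.sign (c j) : ℝ) ^ 2 = |c j| := by
        rw [sq, ← mul_assoc, abs_mul_sign, self_mul_sign]
      rw [div_mul_eq_mul_div, div_eq_iff hS.ne']
      linear_combination S ^ 2 * ‖g j‖ ^ 2 * this
    calc ∑ j, p j * ‖v j‖ ^ 2 = ∑ j, S * |c j| * ‖g j‖ ^ 2 := sum_congr rfl fun j _ => hterm j
      _ ≤ ∑ j, S * |c j| * B := sum_le_sum fun j _ => by gcongr; exact hg j
      _ = S ^ 2 * B := by rw [← sum_mul, ← mul_sum, sq]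
  obtain ⟨N, hNsum, hNsupp, hN⟩ := exists_nat_sum_norm_sub_inv_smul_sq_le hp0 hp1 v hk a
  have hNc : ∀ j, N j ≠ 0 → c j ≠ 0 := fun j hj => by simpa [p, hS.ne'] using hNsupp j hj
  refine ⟨fun j => S / k * N j * SignType.sign (c j), ?_, ?_, ?_⟩
  · have habs : ∀ j, |S / k * N j * (SignType.sign (c j) : ℝ)| = S / k * N j := fun j => by
      by_cases hj : N j = 0
      · simp [hj]
      · rcases (hNc j hj).lt_or_gt with h | h <;> simp [h, abs_mul, abs_div, abs_of_pos hS]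
    rw [sum_congr rfl fun j _ => habs j, ← mul_sum, ← Nat.cast_sum, hNsum]
    field_simp
  · calc (univ.filter fun j => S / k * N j * (SignType.sign (c j) : ℝ) ≠ 0).card
        ≤ (univ.filter fun j => N j ≠ 0).card := card_le_card fun j => by simp +contextual
      _ ≤ k := hNsum ▸ card_filter_ne_zero_le_sum N
  · have hθ : ∑ j, (S / k * N j * (SignType.sign (c j) : ℝ)) • g j =
        (k : ℝ)⁻¹ • ∑ j, (N j : ℝ) • v j := by
      simp only [v, smul_sum, smul_smul]
      exact sum_congr rfl fun j _ => by ring_nf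
    rw [hθ]
    refine hN.trans ?_
    rw [hmean]
    gcongr

end Maurey

theorem stmt_4_general (n M : ℕ) (hn : 1 ≤ n)
    (F : Fin M → Fin n → ℝ)
    (hF : ∀ j, (1 / n : ℝ) * ∑ i, F j i ^ 2 ≤ 1)
    (f : Fin n → ℝ) (θs : Fin M → ℝ) (k : ℕ) (hk : 1 ≤ k) :
    ∃ θ : Fin M → ℝ,
      (∑ j, |θ j|) = (∑ j, |θs j|) ∧
      (Finset.univ.filter fun j => θ j ≠ 0).card ≤ k ∧
      (1 / n : ℝ) * ∑ i, (f i - ∑ j, θ j * F j i) ^ 2 ≤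
        (1 / n : ℝ) * ∑ i, (f i - ∑ j, θs j * F j i) ^ 2 +
          (∑ j, |θs j|) ^ 2 /
            (min k ((Finset.univ.filter fun j => θs j ≠ 0).card) : ℕ) := by
  rcases le_or_gt (univ.filter fun j => θs j ≠ 0).card k with hsparse | hsparse
  · exact ⟨θs, rfl, hsparse, le_add_of_nonneg_right (by positivity)⟩
  rw [min_eq_left hsparse.le]
  have hθs : θs ≠ 0 := by rintro rfl; simp at hsparse
  have hn' : (0 : ℝ) < n := by exact_mod_cast hn
  let e : (Fin n → ℝ) → EuclideanSpace ℝ (Fin n) := WithLp.toLp 2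
  have hnorm : ∀ x : Fin n → ℝ, ∑ i, x i ^ 2 = ‖e x‖ ^ 2 := fun x => by
    simp [e, EuclideanSpace.real_norm_sq_eq]
  have hcomb : ∀ c : Fin M → ℝ,
      ∑ i, (f i - ∑ j, c j * F j i) ^ 2 = ‖e f - ∑ j, c j • e (F j)‖ ^ 2 := fun c => by
    rw [← hnorm]
    simp [e]
  have hF' : ∀ j, ‖e (F j)‖ ^ 2 ≤ n := fun j => by
    rw [← hnorm]
    have := hF j
    rwa [one_div, inv_mul_le_iff₀ hn', mul_one] at this
  obtain ⟨θ, hθ1, hθcard, hθ⟩ :=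
    exists_sparse_norm_sub_sq_le (fun j => e (F j)) hF' θs hθs (e f) hk
  refine ⟨θ, hθ1, hθcard, ?_⟩
  rw [hcomb, hcomb]
  calc 1 / (n : ℝ) * ‖e f - ∑ j, θ j • e (F j)‖ ^ 2
      ≤ 1 / n * (‖e f - ∑ j, θs j • e (F j)‖ ^ 2 + (∑ j, |θs j|) ^ 2 * n / k) := by gcongr
    _ = _ := by field_simp

/-- Maurey argument: for a dictionary `F 1,...,F M` of empirical norm ≤ 1, any
`θ* ≠ 0`, any `k ≥ 1` and any target `f`, there exists `θ` with `|θ|₁ = |θ*|₁`,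
`M(θ) ≤ k` and `‖f - f_θ‖² ≤ ‖f - f_{θ*}‖² + |θ*|₁²/min(k, M(θ*))`. -/
theorem stmt_4 (n M : ℕ) (hn : 1 ≤ n) (hM : 1 ≤ M)
    (F : Fin M → Fin n → ℝ)
    (hF : ∀ j, (1 / n : ℝ) * ∑ i, F j i ^ 2 ≤ 1)
    (f : Fin n → ℝ) (θs : Fin M → ℝ) (hθs : θs ≠ 0) (k : ℕ) (hk : 1 ≤ k) :
    ∃ θ : Fin M → ℝ,
      (∑ j, |θ j|) = (∑ j, |θs j|) ∧
      (Finset.univ.filter fun j => θ j ≠ 0).card ≤ k ∧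
      (1 / n : ℝ) * ∑ i, (f i - ∑ j, θ j * F j i) ^ 2 ≤
        (1 / n : ℝ) * ∑ i, (f i - ∑ j, θs j * F j i) ^ 2 +
          (∑ j, |θs j|) ^ 2 /
            (min k ((Finset.univ.filter fun j => θs j ≠ 0).card) : ℕ) :=
  stmt_4_general n M hn F hF f θs k hk
end

section
/- Fix integers M, n ≥ 1 and assume max_j ‖f_j‖ ≤ 1. For any function η and any constant ν > 0, min over θ ∈ ℝ^M of { ‖f_θ - η‖² + ν²·(M(θ)/n)·log(1 + eM/(M(θ)∨1)) } is at most min over θ ∈ ℝ^M of { ‖f_θ - η‖² + c̃·φ̄(θ) }, where c̃ = 3 + 1/e, φ̄(0) = 0, and for θ ≠ 0: φ̄(θ) = min( ν|θ|₁/√n · √(log(1 + eMν/(|θ|₁√n))), |θ|₁² ) if ⟨f_θ, η⟩ ≤ ‖f_θ‖², and φ̄(θ) = ν|θ|₁/√n · √(log(1 + eMν/(|θ|₁√n))) + ν²log(1+eM)/(c̃ n) otherwise. -/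
open Finset Real RealInnerProductSpace

/-! Maurey's empirical method. Write `f_θ = ∑ p_j v_j` with `p_j = |θ_j| / |θ|₁` and
`v_j = |θ|₁ sign(θ_j) f_j`. The average of `m` independent draws from `p` is an `m`-sparse
`f_θ'` whose expected squared distance to `η` exceeds `‖f_θ - η‖²` by at most `|θ|₁² / m`, so
the `ℓ₀` infimum is at most `‖f_θ - η‖² + |θ|₁² / m + ν² (m / n) log (1 + eM / m)` for every
`m ≥ 1`. Taking `m = ⌈|θ|₁ √n / (ν √L)⌉` with `L = log (1 + eMν / (|θ|₁ √n))` balances the two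
terms up to the factor `3 + 1/e`, using `log (1 + a √(log (1 + a))) ≤ (1 + 1/(2e)) log (1 + a)`.
When this `m` would be below one, `m = 1` is used instead, or, if `⟨f_θ, η⟩ ≤ ‖f_θ‖²`, the
choice `θ' = 0`, which costs `‖η‖² ≤ ‖f_θ - η‖² + ‖f_θ‖² ≤ ‖f_θ - η‖² + |θ|₁²`. -/

section Maurey

variable {E : Type*} [NormedAddCommGroup E] [InnerProductSpace ℝ E]
  {ι : Type*} [Fintype ι] {p : ι → ℝ}

lemma exists_le_sum_mul_of_sum_eq_one {α : Type*} [Fintype α] {P : α → ℝ}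
    (hP : ∀ a, 0 ≤ P a) (hP1 : ∑ a, P a = 1) (f : α → ℝ) : ∃ a, f a ≤ ∑ b, P b * f b := by
  have : Nonempty α := by
    by_contra h
    simp [not_nonempty_iff.mp h] at hP1
  obtain ⟨a, ha⟩ := Finite.exists_min f
  refine ⟨a, ?_⟩
  calc f a = ∑ b, P b * f a := by rw [← sum_mul, hP1, one_mul]
    _ ≤ ∑ b, P b * f b := sum_le_sum fun b _ => mul_le_mul_of_nonneg_left (ha b) (hP b)

lemma sum_mul_norm_add_sq (hp : ∑ j, p j = 1) (v : ι → E) (x : E) :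
    ∑ j, p j * ‖v j + x‖ ^ 2 =
      ‖∑ j, p j • v j + x‖ ^ 2 + (∑ j, p j * ‖v j‖ ^ 2 - ‖∑ j, p j • v j‖ ^ 2) := by
  simp only [norm_add_sq_real, mul_add, sum_add_distrib, ← sum_mul, hp, sum_inner,
    real_inner_smul_left, mul_left_comm (p _) 2, ← mul_sum]
  ring

/-- `∏ k, p (J k)` is the law of `m` independent draws `J k` from `p`. -/
lemma sum_pi_prod_mul_norm_sum_add_sq (hp : ∑ j, p j = 1) (v : ι → E) (m : ℕ) (x : E) :
    ∑ J : Fin m → ι, (∏ k, p (J k)) * ‖∑ k, v (J k) + x‖ ^ 2 =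
      ‖(m : ℝ) • ∑ j, p j • v j + x‖ ^ 2 +
        m * (∑ j, p j * ‖v j‖ ^ 2 - ‖∑ j, p j • v j‖ ^ 2) := by
  induction m generalizing x with
  | zero => simp
  | succ m ih =>
    rw [← (Fin.consEquiv fun _ => ι).sum_comp, Fintype.sum_prod_type]
    simp only [Fin.consEquiv_apply, Fin.prod_univ_succ, Fin.sum_univ_succ, Fin.cons_zero,
      Fin.cons_succ, mul_assoc, ← mul_sum, add_assoc]
    simp_rw [add_left_comm (v _), ih, add_left_comm _ (v _), mul_add, sum_add_distrib, ← sum_mul,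
      hp, sum_mul_norm_add_sq hp, Nat.cast_succ, add_smul, one_smul, add_comm _ (∑ j, p j • v j),
      add_assoc]
    ring

theorem exists_norm_inv_smul_sum_sub_sq_le (hp0 : ∀ j, 0 ≤ p j) (hp : ∑ j, p j = 1)
    (v : ι → E) (y : E) {m : ℕ} (hm : m ≠ 0) :
    ∃ J : Fin m → ι, ‖(m : ℝ)⁻¹ • ∑ k, v (J k) - y‖ ^ 2 ≤
      ‖∑ j, p j • v j - y‖ ^ 2 + (∑ j, p j * ‖v j‖ ^ 2) / m := by
  have hm0 : (m : ℝ) ≠ 0 := Nat.cast_ne_zero.2 hm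
  have hscale (z : E) : ‖(m : ℝ)⁻¹ • z - y‖ ^ 2 = ‖z + -((m : ℝ) • y)‖ ^ 2 / m ^ 2 := by
    rw [← inv_smul_smul₀ hm0 y, ← smul_sub, smul_smul, mul_inv_cancel₀ hm0, one_smul, norm_smul,
      mul_pow, norm_inv, Real.norm_natCast, ← sub_eq_add_neg]
    field_simp
  obtain ⟨J, hJ⟩ := exists_le_sum_mul_of_sum_eq_one (P := fun J : Fin m → ι => ∏ k, p (J k))
    (fun J => prod_nonneg fun k _ => hp0 (J k)) (by rw [← Fintype.sum_pow, hp, one_pow])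
    (fun J => ‖(m : ℝ)⁻¹ • ∑ k, v (J k) - y‖ ^ 2)
  refine ⟨J, hJ.trans ?_⟩
  simp only [hscale, mul_div_assoc', ← sum_div]
  rw [sum_pi_prod_mul_norm_sum_add_sq hp, add_div, ← hscale, inv_smul_smul₀ hm0, sq (m : ℝ),
    mul_div_mul_left _ _ hm0]
  gcongr
  exact sub_le_self _ (sq_nonneg _)

end Maurey

section Dictionary

variable {E : Type*} [NormedAddCommGroup E] [InnerProductSpace ℝ E]
  {ι : Type*} [Fintype ι] {g : ι → E}

lemma sum_abs_pos {θ : ι → ℝ} (hθ : θ ≠ 0) : 0 < ∑ j, |θ j| := by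
  obtain ⟨j, hj⟩ := Function.ne_iff.1 hθ
  exact sum_pos' (fun j _ => abs_nonneg _) ⟨j, mem_univ _, abs_pos.2 hj⟩

lemma norm_sum_smul_le_sum_abs (hg : ∀ j, ‖g j‖ ≤ 1) (θ : ι → ℝ) :
    ‖∑ j, θ j • g j‖ ≤ ∑ j, |θ j| :=
  (norm_sum_le _ _).trans <| sum_le_sum fun j _ => by
    rw [norm_smul, Real.norm_eq_abs]
    exact mul_le_of_le_one_right (abs_nonneg _) (hg j)

lemma card_filter_sum_pi_single_ne_zero_le [DecidableEq ι] {m : ℕ} (J : Fin m → ι)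
    (a : Fin m → ℝ) : #{j | (∑ k, Pi.single (J k) (a k) : ι → ℝ) j ≠ 0} ≤ m := by
  calc #{j | (∑ k, Pi.single (J k) (a k) : ι → ℝ) j ≠ 0}
      ≤ #(univ.image J) := card_le_card fun j hj => by
        contrapose! hj
        simp_all [Pi.single_apply, eq_comm]
    _ ≤ m := card_image_le.trans_eq (card_fin m)

lemma sum_sum_pi_single_smul [DecidableEq ι] {m : ℕ} (J : Fin m → ι) (a : Fin m → ℝ) :
    ∑ j, (∑ k, Pi.single (J k) (a k) : ι → ℝ) j • g j = ∑ k, a k • g (J k) := by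
  rw [← Fintype.linearCombination_apply, map_sum]
  simp only [Fintype.linearCombination_apply_single]

lemma abs_sign_le_one (t : ℝ) : |(SignType.sign t : ℝ)| ≤ 1 := by
  rcases SignType.sign t with _ | _ | _ <;> simp

theorem exists_sparse_norm_sub_sq_le_s5 (hg : ∀ j, ‖g j‖ ≤ 1) (θ : ι → ℝ) (y : E) {m : ℕ}
    (hm : m ≠ 0) :
    ∃ θ' : ι → ℝ, #{j | θ' j ≠ 0} ≤ m ∧
      ‖∑ j, θ' j • g j - y‖ ^ 2 ≤ ‖∑ j, θ j • g j - y‖ ^ 2 + (∑ j, |θ j|) ^ 2 / m := by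
  classical
  rcases eq_or_ne θ 0 with rfl | hθ
  · exact ⟨0, by simp, by simp⟩
  set S := ∑ j, |θ j|
  have hS : 0 < S := sum_abs_pos hθ
  set v : ι → E := fun j => (S * SignType.sign (θ j)) • g j
  have hmean : ∑ j, (|θ j| / S) • v j = ∑ j, θ j • g j := by
    refine sum_congr rfl fun j _ => ?_
    rw [smul_smul, ← mul_assoc, div_mul_cancel₀ _ hS.ne', abs_mul_sign]
  have hvar : ∑ j, |θ j| / S * ‖v j‖ ^ 2 ≤ S ^ 2 := by
    calc ∑ j, |θ j| / S * ‖v j‖ ^ 2 ≤ ∑ j, |θ j| / S * S ^ 2 := by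
          gcongr with j
          rw [norm_smul, norm_mul, Real.norm_of_nonneg hS.le, Real.norm_eq_abs]
          exact (mul_le_mul (mul_le_of_le_one_right hS.le (abs_sign_le_one _)) (hg j)
            (norm_nonneg _) hS.le).trans_eq (mul_one S)
      _ = S ^ 2 := by rw [← sum_mul, ← sum_div, div_self hS.ne', one_mul]
  obtain ⟨J, hJ⟩ := exists_norm_inv_smul_sum_sub_sq_le (p := fun j => |θ j| / S)
    (fun j => by positivity) (by rw [← sum_div, div_self hS.ne']) v y hm
  refine ⟨∑ k, Pi.single (J k) ((m : ℝ)⁻¹ * (S * SignType.sign (θ (J k)))),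
    card_filter_sum_pi_single_ne_zero_le _ _, ?_⟩
  rw [sum_sum_pi_single_smul]
  simp only [mul_smul ((m : ℝ)⁻¹), ← smul_sum]
  rw [hmean] at hJ
  exact hJ.trans (by gcongr)

end Dictionary

lemma monotoneOn_mul_log_one_add_div {c : ℝ} (hc : 0 ≤ c) :
    MonotoneOn (fun x => x * log (1 + c / x)) (Set.Ioi 0) := by
  intro x hx y _ hxy
  have hx : 0 < x := hx
  have hy : 0 < y := hx.trans_le hxy
  have hbern : 1 + c / x ≤ (1 + c / y) ^ (y / x) := by
    have := one_add_mul_self_le_rpow_one_add (by linarith [div_nonneg hc hy.le] : -1 ≤ c / y)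
      ((one_le_div hx).2 hxy)
    rwa [show y / x * (c / y) = c / x by field_simp] at this
  have hlog : log (1 + c / x) ≤ y / x * log (1 + c / y) := by
    rw [← log_rpow (by positivity)]
    exact log_le_log (by positivity) hbern
  calc x * log (1 + c / x) ≤ x * (y / x * log (1 + c / y)) := by gcongr
    _ = y * log (1 + c / y) := by field_simp

lemma log_le_div_exp_one {x : ℝ} (hx : 0 < x) : log x ≤ x / exp 1 := by
  have := log_le_sub_one_of_pos (div_pos hx (exp_pos 1))
  rw [log_div hx.ne' (exp_pos 1).ne', log_exp] at this
  linarith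

lemma log_one_add_mul_sqrt_log_le {a : ℝ} (ha : 0 ≤ a) :
    log (1 + a * √(log (1 + a))) ≤ (1 + 1 / (2 * exp 1)) * log (1 + a) := by
  set L := log (1 + a)
  have hL : 0 ≤ L := log_nonneg (by linarith)
  have hmax : log (max 1 √L) ≤ L / (2 * exp 1) := by
    rcases le_total √L 1 with h | h
    · rw [max_eq_left h, log_one]; positivity
    · rw [max_eq_right h, log_sqrt hL]
      have hL0 : 0 < L := by
        by_contra! h0
        rw [le_antisymm h0 hL, sqrt_zero] at h
        linarith
      rw [mul_comm, ← div_div]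
      linarith [log_le_div_exp_one hL0]
  calc log (1 + a * √L) ≤ log ((1 + a) * max 1 √L) := by
        gcongr
        nlinarith [le_max_left 1 √L, le_max_right 1 √L]
    _ = L + log (max 1 √L) := log_mul (by positivity) (by positivity)
    _ ≤ (1 + 1 / (2 * exp 1)) * L := by linarith [div_eq_mul_one_div L (2 * exp 1)]

lemma exists_sq_div_add_mul_log_le {c S κ : ℝ} (hc : 0 < c) (hS : 0 < S) (hκ : 0 < κ)
    (h : κ * √(log (1 + c * κ / S)) < S) :
    ∃ m : ℕ, m ≠ 0 ∧ S ^ 2 / m + κ ^ 2 * m * log (1 + c / m) ≤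
      (3 + 1 / exp 1) * (κ * S * √(log (1 + c * κ / S))) := by
  set L := log (1 + c * κ / S)
  have hL : 0 < L := log_pos (by linarith [show 0 < c * κ / S by positivity])
  have hsL : 0 < √L := sqrt_pos.2 hL
  set t := S / (κ * √L) with ht_def
  have ht : 1 < t := (one_lt_div (by positivity)).2 h
  refine ⟨⌈t⌉₊, (Nat.ceil_pos.2 (by linarith)).ne', ?_⟩
  set m := ⌈t⌉₊
  have htm : t ≤ m := Nat.le_ceil t
  have hmt : (m : ℝ) ≤ 2 * t := (Nat.ceil_lt_add_one (by linarith)).le.trans (by linarith)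
  have hsq : S ^ 2 / m ≤ κ * S * √L :=
    calc S ^ 2 / m ≤ S ^ 2 / t := by gcongr
      _ = κ * S * √L := by rw [ht_def]; field_simp
  have hlog : log (1 + c / m) ≤ (1 + 1 / (2 * exp 1)) * L :=
    calc log (1 + c / m) ≤ log (1 + c * κ / S * √L) := by
          gcongr
          calc c / m ≤ c / t := by gcongr
            _ = c * κ / S * √L := by rw [ht_def]; field_simp
      _ ≤ (1 + 1 / (2 * exp 1)) * L := log_one_add_mul_sqrt_log_le (by positivity)
  have hpen : κ ^ 2 * m * log (1 + c / m) ≤ (2 + 1 / exp 1) * (κ * S * √L) :=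
    calc κ ^ 2 * m * log (1 + c / m) ≤ κ ^ 2 * (2 * t) * ((1 + 1 / (2 * exp 1)) * L) := by
          gcongr
          exact log_nonneg (by linarith [show 0 ≤ c / m by positivity])
      _ = (2 + 1 / exp 1) * (κ * S * √L) := by
          rw [ht_def]
          field_simp
          exact (sq_sqrt hL.le).symm
  linarith

section SparseRisk

variable {E : Type*} [NormedAddCommGroup E] [InnerProductSpace ℝ E] {M : ℕ} {g : Fin M → E}
  {y : E} {ν n : ℝ}

noncomputable def sparsityPenalty (ν n : ℝ) (M k : ℕ) : ℝ :=
  ν ^ 2 * k / n * log (1 + exp 1 * M / max (k : ℝ) 1)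

noncomputable def sparseRisk (g : Fin M → E) (y : E) (ν n : ℝ) (θ : Fin M → ℝ) : ℝ :=
  ‖∑ j, θ j • g j - y‖ ^ 2 + sparsityPenalty ν n M #{j | θ j ≠ 0}

noncomputable def l1Rate (ν n S : ℝ) (M : ℕ) : ℝ :=
  ν * S / √n * √(log (1 + exp 1 * M * ν / (S * √n)))

lemma sparsityPenalty_of_ne_zero {k : ℕ} (hk : k ≠ 0) :
    sparsityPenalty ν n M k = ν ^ 2 / n * k * log (1 + exp 1 * M / k) := by
  rw [sparsityPenalty, max_eq_left (by exact_mod_cast Nat.one_le_iff_ne_zero.2 hk)]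
  ring

lemma sparsityPenalty_nonneg (hn : 0 ≤ n) (k : ℕ) : 0 ≤ sparsityPenalty ν n M k :=
  mul_nonneg (by positivity)
    (log_nonneg (by linarith [show 0 ≤ exp 1 * M / max (k : ℝ) 1 by positivity]))

lemma sparsityPenalty_mono (hn : 0 ≤ n) : Monotone (sparsityPenalty ν n M) := by
  intro k m hkm
  rcases Nat.eq_zero_or_pos k with rfl | hk
  · simpa [sparsityPenalty] using sparsityPenalty_nonneg hn m
  rw [sparsityPenalty_of_ne_zero hk.ne', sparsityPenalty_of_ne_zero (hk.trans_le hkm).ne',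
    mul_assoc, mul_assoc]
  refine mul_le_mul_of_nonneg_left ?_ (by positivity)
  exact monotoneOn_mul_log_one_add_div (by positivity) (show (0 : ℝ) < k by exact_mod_cast hk)
    (show (0 : ℝ) < m by exact_mod_cast hk.trans_le hkm) (by exact_mod_cast hkm)

lemma bddBelow_range_sparseRisk (hn : 0 ≤ n) : BddBelow (Set.range (sparseRisk g y ν n)) :=
  ⟨0, by
    rintro _ ⟨θ, rfl⟩
    exact add_nonneg (sq_nonneg _) (sparsityPenalty_nonneg hn _)⟩

lemma iInf_sparseRisk_le_norm_sq (hn : 0 ≤ n) : ⨅ θ, sparseRisk g y ν n θ ≤ ‖y‖ ^ 2 :=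
  (ciInf_le (bddBelow_range_sparseRisk hn) 0).trans_eq (by simp [sparseRisk, sparsityPenalty])

lemma iInf_sparseRisk_le (hg : ∀ j, ‖g j‖ ≤ 1) (hn : 0 ≤ n) (θ : Fin M → ℝ) {m : ℕ}
    (hm : m ≠ 0) :
    ⨅ θ', sparseRisk g y ν n θ' ≤ ‖∑ j, θ j • g j - y‖ ^ 2 +
      ((∑ j, |θ j|) ^ 2 / m + ν ^ 2 / n * m * log (1 + exp 1 * M / m)) := by
  obtain ⟨θ', hcard, hθ'⟩ := exists_sparse_norm_sub_sq_le_s5 hg θ y hm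
  calc ⨅ θ', sparseRisk g y ν n θ' ≤ sparseRisk g y ν n θ' :=
        ciInf_le (bddBelow_range_sparseRisk hn) θ'
    _ ≤ _ := by
        rw [sparseRisk, ← sparsityPenalty_of_ne_zero hm, ← add_assoc]
        exact add_le_add hθ' (sparsityPenalty_mono hn hcard)

lemma iInf_sparseRisk_le_l1Rate (hg : ∀ j, ‖g j‖ ≤ 1) (hn : 0 < n) (hν : 0 < ν)
    {θ : Fin M → ℝ} (hθ : θ ≠ 0) (h : l1Rate ν n (∑ j, |θ j|) M < (∑ j, |θ j|) ^ 2) :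
    ⨅ θ', sparseRisk g y ν n θ' ≤
      ‖∑ j, θ j • g j - y‖ ^ 2 + (3 + 1 / exp 1) * l1Rate ν n (∑ j, |θ j|) M := by
  set S := ∑ j, |θ j|
  have hS : 0 < S := sum_abs_pos hθ
  have hM : (0 : ℝ) < M := by
    obtain ⟨j, -⟩ := Function.ne_iff.1 hθ
    exact_mod_cast j.pos
  have hrate : l1Rate ν n S M = ν / √n * S * √(log (1 + exp 1 * M * (ν / √n) / S)) := by
    rw [l1Rate]
    ring_nf
  rw [hrate] at h ⊢
  set κ := ν / √n
  have hκ : 0 < κ := by positivity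
  set L := log (1 + exp 1 * M * κ / S)
  obtain ⟨m, hm, hbound⟩ := exists_sq_div_add_mul_log_le (c := exp 1 * M) (by positivity) hS hκ
    (lt_of_mul_lt_mul_right (show κ * √L * S < S * S by rw [mul_right_comm, ← sq]; exact h)
      hS.le)
  rw [div_pow, sq_sqrt hn.le] at hbound
  exact (iInf_sparseRisk_le hg hn.le θ hm).trans (add_le_add_right hbound _)

lemma iInf_sparseRisk_le_of_inner_le (hg : ∀ j, ‖g j‖ ≤ 1) (hn : 0 < n) (hν : 0 < ν)
    {θ : Fin M → ℝ} (hθ : θ ≠ 0) (hinner : ⟪∑ j, θ j • g j, y⟫ ≤ ‖∑ j, θ j • g j‖ ^ 2) :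
    ⨅ θ', sparseRisk g y ν n θ' ≤ ‖∑ j, θ j • g j - y‖ ^ 2 +
      (3 + 1 / exp 1) * min (l1Rate ν n (∑ j, |θ j|) M) ((∑ j, |θ j|) ^ 2) := by
  rcases lt_or_ge (l1Rate ν n (∑ j, |θ j|) M) ((∑ j, |θ j|) ^ 2) with h | h
  · rw [min_eq_left h.le]
    exact iInf_sparseRisk_le_l1Rate hg hn hν hθ h
  rw [min_eq_right h]
  have hl1 : ‖∑ j, θ j • g j‖ ^ 2 ≤ (∑ j, |θ j|) ^ 2 := by
    gcongr
    exact norm_sum_smul_le_sum_abs hg θ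
  calc ⨅ θ', sparseRisk g y ν n θ' ≤ ‖y‖ ^ 2 := iInf_sparseRisk_le_norm_sq hn.le
    _ ≤ ‖∑ j, θ j • g j - y‖ ^ 2 + ‖∑ j, θ j • g j‖ ^ 2 := by
        rw [norm_sub_sq_real]
        linarith
    _ ≤ ‖∑ j, θ j • g j - y‖ ^ 2 + (3 + 1 / exp 1) * (∑ j, |θ j|) ^ 2 := by
        gcongr
        exact hl1.trans
          (le_mul_of_one_le_left (sq_nonneg _) (by linarith [one_div_pos.2 (exp_pos 1)]))

lemma iInf_sparseRisk_le_l1Rate_add (hg : ∀ j, ‖g j‖ ≤ 1) (hn : 0 < n) (hν : 0 < ν)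
    {θ : Fin M → ℝ} (hθ : θ ≠ 0) :
    ⨅ θ', sparseRisk g y ν n θ' ≤ ‖∑ j, θ j • g j - y‖ ^ 2 + (3 + 1 / exp 1) *
      (l1Rate ν n (∑ j, |θ j|) M + ν ^ 2 * log (1 + exp 1 * M) / ((3 + 1 / exp 1) * n)) := by
  have hc : 1 ≤ 3 + 1 / exp 1 := by linarith [one_div_pos.2 (exp_pos 1)]
  rw [mul_add, ← mul_div_assoc, mul_div_mul_left _ _ (by positivity), ← add_assoc]
  have hlog : 0 ≤ ν ^ 2 * log (1 + exp 1 * M) / n := by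
    have : 0 ≤ log (1 + exp 1 * M) := log_nonneg (by linarith [show 0 ≤ exp 1 * M by positivity])
    positivity
  rcases lt_or_ge (l1Rate ν n (∑ j, |θ j|) M) ((∑ j, |θ j|) ^ 2) with h | h
  · linarith [iInf_sparseRisk_le_l1Rate (y := y) hg hn hν hθ h]
  · have hm1 := iInf_sparseRisk_le (y := y) (ν := ν) hg hn.le θ one_ne_zero
    simp only [Nat.cast_one, div_one, mul_one] at hm1
    have hrate := le_mul_of_one_le_left ((sq_nonneg _).trans h) hc
    linarith [show ν ^ 2 / n * log (1 + exp 1 * M) = ν ^ 2 * log (1 + exp 1 * M) / n by ring]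

end SparseRisk

noncomputable def empirical (n : ℕ) : (Fin n → ℝ) →ₗ[ℝ] EuclideanSpace ℝ (Fin n) :=
  (√n)⁻¹ • (WithLp.linearEquiv 2 ℝ (Fin n → ℝ)).symm.toLinearMap

lemma inner_empirical {n : ℕ} (x z : Fin n → ℝ) :
    ⟪empirical n x, empirical n z⟫ = 1 / n * ∑ i, x i * z i := by
  simp only [empirical, LinearMap.smul_apply, LinearEquiv.coe_coe, WithLp.coe_symm_linearEquiv,
    real_inner_smul_left, real_inner_smul_right, EuclideanSpace.inner_toLp_toLp, dotProduct,
    star_trivial, ← mul_assoc, ← mul_inv, mul_self_sqrt n.cast_nonneg, one_div, mul_comm (z _)]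

lemma norm_empirical_sq {n : ℕ} (x : Fin n → ℝ) : ‖empirical n x‖ ^ 2 = 1 / n * ∑ i, x i ^ 2 := by
  rw [← real_inner_self_eq_norm_sq, inner_empirical]
  simp only [sq]

lemma sum_smul_empirical {n M : ℕ} (θ : Fin M → ℝ) (F : Fin M → Fin n → ℝ) :
    ∑ j, θ j • empirical n (F j) = empirical n (fun i => ∑ j, θ j * F j i) := by
  simp only [← map_smul, ← map_sum]
  congr 1
  ext i
  simp

theorem stmt_5_general (n M : ℕ) (hn : 1 ≤ n)
    (F : Fin M → Fin n → ℝ)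
    (hF : ∀ j, (1 / n : ℝ) * ∑ i, F j i ^ 2 ≤ 1)
    (η : Fin n → ℝ) (ν : ℝ) (hν : 0 < ν) :
    -- notation
    (fun nsq : (Fin n → ℝ) → ℝ => fun fθ : (Fin M → ℝ) → Fin n → ℝ =>
     fun l1 : (Fin M → ℝ) → ℝ => fun M0 : (Fin M → ℝ) → ℕ =>
     fun ip : (Fin n → ℝ) → (Fin n → ℝ) → ℝ =>
      (⨅ θ : Fin M → ℝ, nsq (fun i => fθ θ i - η i) +
          ν ^ 2 * (M0 θ : ℝ) / n *
            Real.log (1 + Real.exp 1 * M / (max (M0 θ : ℝ) 1))) ≤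
        ⨅ θ : Fin M → ℝ, nsq (fun i => fθ θ i - η i) +
          (3 + 1 / Real.exp 1) *
            (if θ = 0 then 0
             else if ip (fθ θ) η ≤ nsq (fθ θ) then
               min (ν * l1 θ / Real.sqrt n *
                  Real.sqrt (Real.log (1 + Real.exp 1 * M * ν / (l1 θ * Real.sqrt n))))
                 (l1 θ ^ 2)
             else
               ν * l1 θ / Real.sqrt n *
                  Real.sqrt (Real.log (1 + Real.exp 1 * M * ν / (l1 θ * Real.sqrt n))) +
                 ν ^ 2 * Real.log (1 + Real.exp 1 * M) / ((3 + 1 / Real.exp 1) * n)))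
      (fun g => (1 / n : ℝ) * ∑ i, g i ^ 2)
      (fun θ i => ∑ j, θ j * F j i)
      (fun θ => ∑ j, |θ j|)
      (fun θ => (Finset.univ.filter fun j => θ j ≠ 0).card)
      (fun g h => (1 / n : ℝ) * ∑ i, g i * h i) := by
  have hn0 : (0 : ℝ) < n := by exact_mod_cast hn
  set G := fun j => empirical n (F j)
  have hG (j : Fin M) : ‖G j‖ ≤ 1 := by
    rw [← sq_le_one_iff₀ (norm_nonneg _), norm_empirical_sq]
    exact hF j
  have hrisk (θ : Fin M → ℝ) : 1 / (n : ℝ) * ∑ i, (∑ j, θ j * F j i - η i) ^ 2 =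
      ‖∑ j, θ j • G j - empirical n η‖ ^ 2 := by
    rw [sum_smul_empirical, ← map_sub, norm_empirical_sq]
    rfl
  have hnorm (θ : Fin M → ℝ) :
      1 / (n : ℝ) * ∑ i, (∑ j, θ j * F j i) ^ 2 = ‖∑ j, θ j • G j‖ ^ 2 := by
    rw [sum_smul_empirical, norm_empirical_sq]
  have hip (θ : Fin M → ℝ) : 1 / (n : ℝ) * ∑ i, (∑ j, θ j * F j i) * η i =
      ⟪∑ j, θ j • G j, empirical n η⟫ := by
    rw [sum_smul_empirical, inner_empirical]
  beta_reduce
  simp only [hrisk, hnorm, hip]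
  refine le_ciInf fun θ => ?_
  split_ifs with h0 hinner
  · subst h0
    simp only [Pi.zero_apply, zero_smul, sum_const_zero, zero_sub, norm_neg, mul_zero, add_zero]
    exact iInf_sparseRisk_le_norm_sq hn0.le
  · exact iInf_sparseRisk_le_of_inner_le hG hn0 hν h0 hinner
  · exact iInf_sparseRisk_le_l1Rate_add hG hn0 hν h0

/-- Lemma converting an ℓ₀-type sparsity oracle bound into a combined ℓ₀/ℓ₁
bound (Lemma 2 of the paper): with `c̃ = 3 + 1/e`,
`min_θ {‖f_θ - η‖² + ν²(M(θ)/n)log(1+eM/(M(θ)∨1))} ≤ min_θ {‖f_θ - η‖² + c̃ φ̄(θ)}`. -/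
theorem stmt_5 (n M : ℕ) (hn : 1 ≤ n) (hM : 1 ≤ M)
    (F : Fin M → Fin n → ℝ)
    (hF : ∀ j, (1 / n : ℝ) * ∑ i, F j i ^ 2 ≤ 1)
    (η : Fin n → ℝ) (ν : ℝ) (hν : 0 < ν) :
    -- notation
    (fun nsq : (Fin n → ℝ) → ℝ => fun fθ : (Fin M → ℝ) → Fin n → ℝ =>
     fun l1 : (Fin M → ℝ) → ℝ => fun M0 : (Fin M → ℝ) → ℕ =>
     fun ip : (Fin n → ℝ) → (Fin n → ℝ) → ℝ =>
      (⨅ θ : Fin M → ℝ, nsq (fun i => fθ θ i - η i) +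
          ν ^ 2 * (M0 θ : ℝ) / n *
            Real.log (1 + Real.exp 1 * M / (max (M0 θ : ℝ) 1))) ≤
        ⨅ θ : Fin M → ℝ, nsq (fun i => fθ θ i - η i) +
          (3 + 1 / Real.exp 1) *
            (if θ = 0 then 0
             else if ip (fθ θ) η ≤ nsq (fθ θ) then
               min (ν * l1 θ / Real.sqrt n *
                  Real.sqrt (Real.log (1 + Real.exp 1 * M * ν / (l1 θ * Real.sqrt n))))
                 (l1 θ ^ 2)
             else
               ν * l1 θ / Real.sqrt n *
                  Real.sqrt (Real.log (1 + Real.exp 1 * M * ν / (l1 θ * Real.sqrt n))) +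
                 ν ^ 2 * Real.log (1 + Real.exp 1 * M) / ((3 + 1 / Real.exp 1) * n)))
      (fun g => (1 / n : ℝ) * ∑ i, g i ^ 2)
      (fun θ i => ∑ j, θ j * F j i)
      (fun θ => ∑ j, |θ j|)
      (fun θ => (Finset.univ.filter fun j => θ j ≠ 0).card)
      (fun g h => (1 / n : ℝ) * ∑ i, g i * h i) :=
  stmt_5_general n M hn F hF η ν hν
end

section
/- Let M ≥ 2 and 1 ≤ k ≤ M be integers, and set k̄ = min(k, M - k). Then there exists a subset Ω of {ω ∈ {0,1}^M : ∑_j ω_j = k} such that (i) the Hamming distance ρ(ω, ω') = #{j : ω_j ≠ ω'_j} satisfies ρ(ω, ω') ≥ (k̄+1)/4 for all distinct ω, ω' ∈ Ω, and (ii) log(card(Ω)) ≥ C₁·k̄·log(1 + eM/k̄) with C₁ = 9·10⁻⁴. -/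
/-!
Cut `M` into `w` blocks of length `b = ⌊M / w⌋` and encode `c ∈ [b]^w` as the binary word with
a single one in each block, at position `c i` of block `i`: these words have weight `w`, and the
encoding doubles Hamming distances. A maximal code in `[b]^w` of minimum distance `s + 1`,
`s = ⌊w / 8⌋`, covers `[b]^w` by radius-`s` balls, so it has at least `b^(w - s) / C(w, s)`
words; since `C(w, s) ≤ (e w / s)^s`, its logarithm is of order `w log b`, which dominates
`w log (1 + e M / w)` because `b ≥ 2`. When `k > M / 2`, complementing the words of weight
`M - k` preserves all distances.
-/

open Finset Fintype Real

section Gilbert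

variable {ι α : Type*} [Fintype ι] [DecidableEq ι] [Fintype α] [DecidableEq α]

theorem card_filter_hammingDist_le_le (c : ι → α) {s : ℕ} (hs : s ≤ card ι) :
    #{x | hammingDist x c ≤ s} ≤ (card ι).choose s * card α ^ s := by
  calc #{x | hammingDist x c ≤ s}
      ≤ #((powersetCard s univ).biUnion fun S =>
          piFinset fun j => if j ∈ S then univ else {c j}) := by
        refine card_le_card fun x hx => ?_
        obtain ⟨S, hDS, -, hS⟩ := exists_subsuperset_card_eq (subset_univ {j | x j ≠ c j})
          (mem_filter.1 hx).2 (by simpa using hs)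
        simp only [mem_biUnion, mem_powersetCard_univ, mem_piFinset]
        refine ⟨S, hS, fun j => ?_⟩
        split_ifs with hj
        · exact mem_univ _
        · exact mem_singleton.2 (not_not.1 fun hne => hj (hDS (by simpa using hne)))
    _ ≤ ∑ S ∈ powersetCard s univ, #(piFinset fun j => if j ∈ S then univ else {c j}) :=
        card_biUnion_le
    _ = ∑ S ∈ powersetCard s univ, card α ^ s := sum_congr rfl fun S hS => by
        simp only [card_piFinset, apply_ite card, card_univ, card_singleton]
        rw [Finset.prod_ite_mem, univ_inter, prod_const, (mem_powersetCard_univ.1 hS)]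
    _ = (card ι).choose s * card α ^ s := by simp

theorem exists_gilbert_code (s : ℕ) (hs : s ≤ card ι) :
    ∃ C : Finset (ι → α), (C : Set (ι → α)).Pairwise (fun x y => s < hammingDist x y) ∧
      card α ^ card ι ≤ #C * ((card ι).choose s * card α ^ s) := by
  classical
  let codes := (univ : Finset (Finset (ι → α))).filter
    fun C : Finset (ι → α) => (C : Set (ι → α)).Pairwise (fun x y => s < hammingDist x y)
  obtain ⟨C, hC, hmax⟩ := codes.exists_max_image card ⟨∅, by simp [codes]⟩
  replace hC := (mem_filter.1 hC).2
  refine ⟨C, hC, ?_⟩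
  have hcover : ∀ x, ∃ c ∈ C, hammingDist x c ≤ s := by
    by_contra! hfar
    obtain ⟨x, hx⟩ := hfar
    have hxC : x ∉ C := fun h => by simpa using hx x h
    have := hmax (insert x C) <| mem_filter.2 ⟨mem_univ _, by
      rw [coe_insert]
      exact hC.insert fun c hc _ => ⟨hx c hc, hammingDist_comm x c ▸ hx c hc⟩⟩
    rw [card_insert_of_notMem hxC] at this
    omega
  calc card α ^ card ι = #(univ : Finset (ι → α)) := by simp
    _ ≤ #(C.biUnion fun c => {x | hammingDist x c ≤ s}) :=
        card_le_card fun x _ => by simpa using hcover x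
    _ ≤ ∑ c ∈ C, #{x | hammingDist x c ≤ s} := card_biUnion_le
    _ ≤ ∑ c ∈ C, (card ι).choose s * card α ^ s :=
        sum_le_sum fun c _ => card_filter_hammingDist_le_le c hs
    _ = #C * ((card ι).choose s * card α ^ s) := by rw [sum_const, smul_eq_mul]

end Gilbert

section BlockCode

variable {ι β κ : Type*}

theorem hammingDist_decide_mem [Fintype κ] [DecidableEq κ] (S T : Finset κ) :
    hammingDist (fun j => decide (j ∈ S)) (fun j => decide (j ∈ T)) = #(S \ T) + #(T \ S) := by
  rw [← card_union_of_disjoint disjoint_sdiff_sdiff, hammingDist]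
  congr 1
  ext j
  simp only [mem_filter, mem_univ, true_and, mem_union, mem_sdiff, ne_eq, decide_eq_decide]
  tauto

def graphEmb (e : ι × β ↪ κ) (c : ι → β) : ι ↪ κ :=
  ⟨fun i => e (i, c i), fun _ _ h => congrArg Prod.fst (e.injective h)⟩

@[simp]
theorem graphEmb_apply (e : ι × β ↪ κ) (c : ι → β) (i : ι) : graphEmb e c i = e (i, c i) :=
  rfl

theorem map_graphEmb_sdiff [Fintype ι] [DecidableEq β] [DecidableEq κ] (e : ι × β ↪ κ)
    (c c' : ι → β) :
    univ.map (graphEmb e c) \ univ.map (graphEmb e c') =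
      ({i | c i ≠ c' i} : Finset ι).map (graphEmb e c) := by
  ext j
  simp only [graphEmb_apply, mem_sdiff, mem_map, mem_univ, true_and, mem_filter, not_exists]
  constructor
  · rintro ⟨⟨i, rfl⟩, hi⟩
    exact ⟨i, fun h => hi i (by rw [h]), rfl⟩
  · rintro ⟨i, hi, rfl⟩
    refine ⟨⟨i, rfl⟩, fun i' h => hi ?_⟩
    obtain ⟨rfl, h⟩ := Prod.ext_iff.1 (e.injective h)
    exact h.symm

def blockWord [Fintype ι] [DecidableEq κ] (e : ι × β ↪ κ) (c : ι → β) : κ → Bool :=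
  fun j => decide (j ∈ univ.map (graphEmb e c))

theorem card_blockWord_eq_true [Fintype ι] [Fintype κ] [DecidableEq κ] (e : ι × β ↪ κ)
    (c : ι → β) :
    #{j | blockWord e c j = true} = card ι := by
  simp only [blockWord, decide_eq_true_eq]
  rw [filter_mem_eq_inter, univ_inter, card_map, card_univ]

theorem hammingDist_blockWord [Fintype ι] [Fintype κ] [DecidableEq β] [DecidableEq κ]
    (e : ι × β ↪ κ) (c c' : ι → β) :
    hammingDist (blockWord e c) (blockWord e c') = 2 * hammingDist c c' := by
  refine (hammingDist_decide_mem _ _).trans ?_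
  rw [map_graphEmb_sdiff, map_graphEmb_sdiff, card_map, card_map,
    ← hammingDist, ← hammingDist, hammingDist_comm c', two_mul]

theorem blockWord_injective [Fintype ι] [Fintype κ] [DecidableEq β] [DecidableEq κ]
    (e : ι × β ↪ κ) : Function.Injective (blockWord e) := fun c c' h => by
  simpa [h] using hammingDist_blockWord e c c'

end BlockCode

theorem exists_blockWord_code {M k b : ℕ} (hkb : k * b ≤ M) {s : ℕ} (hs : s ≤ k) :
    ∃ Ω : Finset (Fin M → Bool), (∀ ω ∈ Ω, #{j | ω j = true} = k) ∧
      (Ω : Set (Fin M → Bool)).Pairwise (fun ω ω' => 2 * (s + 1) ≤ hammingDist ω ω') ∧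
      b ^ k ≤ #Ω * (k.choose s * b ^ s) := by
  obtain ⟨C, hC, hcard⟩ :=
    exists_gilbert_code (ι := Fin k) (α := Fin b) s (by simpa using hs)
  simp only [Fintype.card_fin] at hcard
  let e : Fin k × Fin b ↪ Fin M := finProdFinEquiv.toEmbedding.trans (Fin.castLEEmb hkb)
  refine ⟨C.image (blockWord e), ?_, ?_, ?_⟩
  · simp [card_blockWord_eq_true]
  · rw [coe_image]
    rintro _ ⟨c, hc, rfl⟩ _ ⟨c', hc', rfl⟩ hne
    have := hC hc hc' (ne_of_apply_ne _ hne)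
    rw [hammingDist_blockWord]
    omega
  · rwa [card_image_of_injective _ (blockWord_injective e)]

theorem Nat.choose_le_exp_one_mul_div_pow (k s : ℕ) :
    (k.choose s : ℝ) ≤ (exp 1 * k / s) ^ s := by
  rcases s.eq_zero_or_pos with rfl | hs
  · simp
  have hs' : (0 : ℝ) < s := by exact_mod_cast hs
  calc (k.choose s : ℝ) ≤ (k : ℝ) ^ s / s.factorial := Nat.choose_le_pow_div s k
    _ = (k / s : ℝ) ^ s * ((s : ℝ) ^ s / s.factorial) := by rw [div_pow]; field_simp
    _ ≤ (k / s : ℝ) ^ s * exp s := by gcongr; exact pow_div_factorial_le_exp _ hs'.le s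
    _ = (exp 1 * k / s) ^ s := by rw [← exp_one_pow, ← mul_pow]; ring

theorem Real.log_choose_le {k s : ℕ} (hs : s ≤ k) :
    log (k.choose s) ≤ s * log (exp 1 * k / s) := by
  rw [← log_pow]
  exact log_le_log (by exact_mod_cast Nat.choose_pos hs) (Nat.choose_le_exp_one_mul_div_pow k s)

theorem Real.mul_log_div_le_mul_log_div {x y c : ℝ} (hx : 0 < x) (hxy : x ≤ y)
    (hc : exp 1 * y ≤ c) : x * log (c / x) ≤ y * log (c / y) := by
  have hy : 0 < y := hx.trans_le hxy
  have hc0 : 0 < c := lt_of_lt_of_le (by positivity) hc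
  have hlog : 1 ≤ log (c / y) := by
    rw [le_log_iff_exp_le (by positivity), le_div_iff₀ hy]
    exact hc
  have hsplit : log (c / x) = log (c / y) + log (y / x) := by
    rw [← log_mul (by positivity) (by positivity)]
    field_simp
  have hyx : x * log (y / x) ≤ y - x := by
    have := mul_le_mul_of_nonneg_left (log_le_sub_one_of_pos (div_pos hy hx)) hx.le
    rwa [mul_sub, mul_div_cancel₀ _ hx.ne', mul_one] at this
  calc x * log (c / x) = x * log (c / y) + x * log (y / x) := by rw [hsplit, mul_add]
    _ ≤ x * log (c / y) + (y - x) * log (c / y) := by nlinarith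
    _ = y * log (c / y) := by ring

theorem Real.log_choose_le_of_mul_le {k s : ℕ} {r : ℝ} (hr : 1 ≤ r) (hs : r * s ≤ k) :
    log (k.choose s) ≤ k / r * (log r + 1) := by
  have hk : (0 : ℝ) ≤ k := k.cast_nonneg
  rcases s.eq_zero_or_pos with rfl | hs0
  · simpa using mul_nonneg (div_nonneg hk (by linarith)) (add_nonneg (log_nonneg hr) zero_le_one)
  have hs' : (1 : ℝ) ≤ s := by exact_mod_cast hs0
  have hsk : s ≤ k := by exact_mod_cast (show (s : ℝ) ≤ k by nlinarith)
  calc log (k.choose s) ≤ s * log (exp 1 * k / s) := log_choose_le hsk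
    _ ≤ k / r * log (exp 1 * k / (k / r)) :=
        mul_log_div_le_mul_log_div (by positivity) (by rw [le_div_iff₀ (by linarith)]; linarith)
          (by rw [mul_div_assoc']; exact div_le_self (by positivity) hr)
    _ = k / r * (log r + 1) := by
        rcases hk.eq_or_lt with hk0 | hk0
        · simp [← hk0]
        rw [mul_div_assoc, div_div_cancel₀ hk0.ne', log_mul (exp_pos 1).ne' (by positivity),
          log_exp, add_comm]

theorem log_one_add_exp_one_mul_div_le {M w : ℕ} (hw : 0 < w) (hb : 2 ≤ M / w) :
    log (1 + exp 1 * M / w) ≤ log (M / w : ℕ) + log 2 + 1 := by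
  have hw' : (0 : ℝ) < w := by exact_mod_cast hw
  have hb' : (2 : ℝ) ≤ (M / w : ℕ) := by exact_mod_cast hb
  have hM : (M : ℝ) ≤ w * ((M / w : ℕ) + 1) := by exact_mod_cast (Nat.lt_mul_div_succ M hw).le
  have he : 1 ≤ exp 1 := one_le_exp zero_le_one
  calc log (1 + exp 1 * M / w) ≤ log ((M / w : ℕ) * 2 * exp 1) := by
        refine log_le_log (by positivity) ?_
        have : exp 1 * M / w ≤ exp 1 * ((M / w : ℕ) + 1) := by
          rw [div_le_iff₀ hw']
          nlinarith [mul_le_mul_of_nonneg_left hM (exp_pos 1).le]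
        nlinarith
    _ = log (M / w : ℕ) + log 2 + 1 := by
        rw [log_mul (by positivity) (exp_pos 1).ne', log_mul (by positivity) two_ne_zero, log_exp]

theorem mul_log_le_log_of_pow_le_mul_choose {M w N : ℕ} (hw : 0 < w) (hb : 2 ≤ M / w)
    (hN : (M / w) ^ w ≤ N * (w.choose (w / 8) * (M / w) ^ (w / 8))) :
    9 / 10 ^ 4 * w * log (1 + exp 1 * M / w) ≤ log N := by
  have hN0 : (0 : ℝ) < N := by
    refine Nat.cast_pos.2 (Nat.pos_of_ne_zero fun h0 => ?_)
    rw [h0, zero_mul, Nat.le_zero] at hN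
    exact (pow_pos (by omega) w).ne' hN
  have hb0 : (0 : ℝ) < (M / w : ℕ) := by exact_mod_cast (show 0 < M / w by omega)
  have hch : (0 : ℝ) < w.choose (w / 8) := by exact_mod_cast Nat.choose_pos (Nat.div_le_self w 8)
  set L := log (M / w : ℕ)
  have hL : log 2 ≤ L := log_le_log two_pos (by exact_mod_cast hb)
  have hlogN : w * L ≤ log N + log (w.choose (w / 8)) + (w / 8 : ℕ) * L := by
    have := log_le_log (by positivity) (show ((M / w : ℕ) : ℝ) ^ w ≤
      N * (w.choose (w / 8) * ((M / w : ℕ) : ℝ) ^ (w / 8)) by exact_mod_cast hN)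
    rwa [log_mul hN0.ne' (by positivity), log_mul hch.ne' (by positivity), log_pow, log_pow,
      ← add_assoc] at this
  have hchoose : log (w.choose (w / 8)) ≤ w / 8 * (log 8 + 1) :=
    log_choose_le_of_mul_le (by norm_num) (by exact_mod_cast Nat.mul_div_le w 8)
  have hs : ((w / 8 : ℕ) : ℝ) ≤ w / 8 := Nat.cast_div_le
  have hlog8 : log 8 = 3 * log 2 := by
    rw [show (8 : ℝ) = 2 ^ 3 by norm_num, log_pow]; norm_num
  have := log_two_gt_d9
  calc 9 / 10 ^ 4 * w * log (1 + exp 1 * M / w) ≤ 9 / 10 ^ 4 * w * (L + log 2 + 1) := by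
        gcongr
        exact log_one_add_exp_one_mul_div_le hw hb
    _ ≤ w * L - w / 8 * (log 8 + 1) - w / 8 * L := by nlinarith
    _ ≤ log N := by nlinarith [mul_le_mul_of_nonneg_right hs (show 0 ≤ L by linarith)]

theorem exists_weight_code {M w : ℕ} (h : 2 * w ≤ M) :
    ∃ Ω : Finset (Fin M → Bool), (∀ ω ∈ Ω, #{j | ω j = true} = w) ∧
      (Ω : Set (Fin M → Bool)).Pairwise
        (fun ω ω' => ((w : ℝ) + 1) / 4 ≤ hammingDist ω ω') ∧
      9 / 10 ^ 4 * w * log (1 + exp 1 * M / w) ≤ log #Ω := by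
  rcases w.eq_zero_or_pos with rfl | hw
  · exact ⟨{fun _ => false}, by simp, by simp, by simp⟩
  have hb : 2 ≤ M / w := (Nat.le_div_iff_mul_le hw).2 (by linarith)
  obtain ⟨Ω, hΩw, hΩd, hΩc⟩ :=
    exists_blockWord_code (b := M / w) (Nat.mul_div_le M w) (Nat.div_le_self w 8)
  refine ⟨Ω, hΩw, hΩd.imp fun ω ω' hd => ?_, mul_log_le_log_of_pow_le_mul_choose hw hb hΩc⟩
  have hw8 : ((w : ℝ) + 1) ≤ 8 * (w / 8 + 1 : ℕ) := by exact_mod_cast (by omega : w + 1 ≤ _)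
  have hd' : (2 * (w / 8 + 1) : ℕ) ≤ (hammingDist ω ω' : ℝ) := by exact_mod_cast hd
  push_cast at hw8 hd' ⊢
  linarith

theorem exists_compl_weight_code {ι : Type*} [Fintype ι] [DecidableEq ι] {w : ℕ}
    {P : ℕ → Prop} {Ω : Finset (ι → Bool)} (hw : ∀ ω ∈ Ω, #{j | ω j = true} = w)
    (hP : (Ω : Set (ι → Bool)).Pairwise fun ω ω' => P (hammingDist ω ω')) :
    ∃ Ω' : Finset (ι → Bool), (∀ ω ∈ Ω', #{j | ω j = true} = Fintype.card ι - w) ∧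
      (Ω' : Set (ι → Bool)).Pairwise (fun ω ω' => P (hammingDist ω ω')) ∧ #Ω' = #Ω := by
  have hinj : Function.Injective fun (ω : ι → Bool) j => !ω j :=
    fun ω ω' h => funext fun j => by simpa using congrFun h j
  refine ⟨Ω.image fun ω j => !ω j, ?_, ?_, card_image_of_injective _ hinj⟩
  · simp only [forall_mem_image, Bool.not_eq_true']
    intro ω hω
    have := card_filter_add_card_filter_not (s := univ) (fun j => ω j = true)
    simp only [Bool.not_eq_true, card_univ] at this
    rw [← hw ω hω]
    omega
  · rw [coe_image]
    rintro _ ⟨ω, hω, rfl⟩ _ ⟨ω', hω', rfl⟩ hne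
    rw [hammingDist_comp (fun _ => not) (fun _ => Bool.not_injective)]
    exact hP hω hω' fun h => hne (h ▸ rfl)

theorem stmt_9_general (M k : ℕ) (hkM : k ≤ M) :
    ∃ Ω : Finset (Fin M → Bool),
      (∀ ω ∈ Ω, (Finset.univ.filter fun j => ω j = true).card = k) ∧
      (∀ ω ∈ Ω, ∀ ω' ∈ Ω, ω ≠ ω' →
        ((min k (M - k) : ℕ) + 1 : ℝ) / 4 ≤
          (Finset.univ.filter fun j => ω j ≠ ω' j).card) ∧
      (9 / 10 ^ 4 : ℝ) * (min k (M - k) : ℕ) *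
          Real.log (1 + Real.exp 1 * M / (min k (M - k) : ℕ)) ≤
        Real.log Ω.card := by
  obtain ⟨Ω, hw, hd, hc⟩ := exists_weight_code (M := M) (w := min k (M - k)) (by omega)
  rcases le_total k (M - k) with h | h
  · rw [min_eq_left h] at hw
    exact ⟨Ω, hw, fun ω hω ω' hω' => hd hω hω', hc⟩
  · obtain ⟨Ω', hw', hd', hc'⟩ :=
      exists_compl_weight_code (P := fun n => _ ≤ (n : ℝ)) hw hd
    rw [min_eq_right h, Fintype.card_fin, Nat.sub_sub_self hkM] at hw'
    exact ⟨Ω', hw', fun ω hω ω' hω' => hd' hω hω', hc' ▸ hc⟩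

/-- Generalized Varshamov–Gilbert lemma: for `M ≥ 2`, `1 ≤ k ≤ M` and
`k̄ = min(k, M-k)`, there is a set `Ω` of binary vectors with exactly `k` ones,
pairwise Hamming distance at least `(k̄+1)/4`, and
`log card(Ω) ≥ C₁ k̄ log(1+eM/k̄)` with `C₁ = 9·10⁻⁴`. -/
theorem stmt_9 (M k : ℕ) (hM : 2 ≤ M) (hk1 : 1 ≤ k) (hkM : k ≤ M) :
    ∃ Ω : Finset (Fin M → Bool),
      (∀ ω ∈ Ω, (Finset.univ.filter fun j => ω j = true).card = k) ∧
      (∀ ω ∈ Ω, ∀ ω' ∈ Ω, ω ≠ ω' →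
        ((min k (M - k) : ℕ) + 1 : ℝ) / 4 ≤
          (Finset.univ.filter fun j => ω j ≠ ω' j).card) ∧
      (9 / 10 ^ 4 : ℝ) * (min k (M - k) : ℕ) *
          Real.log (1 + Real.exp 1 * M / (min k (M - k) : ℕ)) ≤
        Real.log Ω.card :=
  stmt_9_general M k hkM
end

section
/- Define, for θ ∈ ℝⁿ, ψ*_n(θ) = min( M(θ)·log n / n, |θ|₁·√(log n / n), |θ|₁² ) + 1/n and ψ^{01}_n(θ) = 2 log n · ( 1/n + ∑_{i=1}^n min(θ_i², 1/n) ). Fix constants 0 < a < b < ∞ and let Θ_n = {θ ∈ ℝⁿ : a/√n ≤ |θ_j| ≤ b/√n for all j with θ_j ≠ 0}. Then sup_{θ ∈ Θ_n} ψ*_n(θ)/ψ^{01}_n(θ) → 0 as n → ∞. -/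
open Finset Filter Topology

/-! Every nonzero coordinate of `θ ∈ Θ_n` has size of order `1/√n`, so with `M` nonzero coordinates
`|θ|₁ ≤ b M/√n` and `∑ᵢ min(θᵢ², 1/n) ≥ min(a², 1) M/n`. Comparing the middle term of `ψ*_n` with
`ψ⁰¹_n` gives `ψ*_n/ψ⁰¹_n ≤ (b M √(log n) + 1) / (2 (min(a², 1) M + 1) log n)`, which is
`O(1/√(log n))` uniformly in `M`. -/

noncomputable def psiStar {n : ℕ} (θ : Fin n → ℝ) : ℝ :=
  min (((univ.filter fun j => θ j ≠ 0).card : ℝ) * Real.log n / n)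
      (min ((∑ j, |θ j|) * Real.sqrt (Real.log n / n)) ((∑ j, |θ j|) ^ 2))
    + 1 / n

noncomputable def psi01 {n : ℕ} (θ : Fin n → ℝ) : ℝ :=
  2 * Real.log n * (1 / n + ∑ i, min ((θ i) ^ 2) (1 / n))

section SupportBounds

variable {ι : Type*} [Fintype ι] (θ : ι → ℝ)

theorem sum_abs_le_card_support_mul {B : ℝ} (hB : ∀ j, θ j ≠ 0 → |θ j| ≤ B) :
    ∑ j, |θ j| ≤ (univ.filter fun j => θ j ≠ 0).card * B := by
  rw [← sum_filter_of_ne fun j _ h => abs_ne_zero.mp h, ← nsmul_eq_mul]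
  exact sum_le_card_nsmul _ _ _ fun j hj => hB j (mem_filter.mp hj).2

theorem card_support_mul_le_sum_min {A t : ℝ} (ht : 0 ≤ t)
    (hA : ∀ j, θ j ≠ 0 → A ≤ θ j ^ 2) :
    (univ.filter fun j => θ j ≠ 0).card * min A t ≤ ∑ i, min (θ i ^ 2) t := by
  rw [← nsmul_eq_mul]
  calc _ ≤ ∑ i ∈ univ.filter fun j => θ j ≠ 0, min (θ i ^ 2) t :=
        card_nsmul_le_sum _ _ _ fun i hi => min_le_min_right t (hA i (mem_filter.mp hi).2)
    _ ≤ ∑ i, min (θ i ^ 2) t :=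
        sum_le_sum_of_subset_of_nonneg (filter_subset _ _) fun i _ _ => le_min (sq_nonneg _) ht

end SupportBounds

section Ratio

variable {n : ℕ} (θ : Fin n → ℝ)

theorem psiStar_nonneg : 0 ≤ psiStar θ := by
  unfold psiStar
  positivity

theorem psiStar_le {b : ℝ} (hθ : ∀ j, θ j ≠ 0 → |θ j| ≤ b / Real.sqrt n) :
    psiStar θ ≤ (univ.filter fun j => θ j ≠ 0).card * b * Real.sqrt (Real.log n) / n + 1 / n := by
  have hsqrt : Real.sqrt (Real.log n / n) = Real.sqrt (Real.log n) / Real.sqrt n :=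
    Real.sqrt_div (Real.log_natCast_nonneg n) n
  have hmid : (∑ j, |θ j|) * Real.sqrt (Real.log n / n)
      ≤ (univ.filter fun j => θ j ≠ 0).card * b * Real.sqrt (Real.log n) / n :=
    calc _ ≤ (univ.filter fun j => θ j ≠ 0).card * (b / Real.sqrt n) * Real.sqrt (Real.log n / n) :=
          mul_le_mul_of_nonneg_right (sum_abs_le_card_support_mul θ hθ) (Real.sqrt_nonneg _)
      _ = (univ.filter fun j => θ j ≠ 0).card * b * Real.sqrt (Real.log n)
            / (Real.sqrt n * Real.sqrt n) := by rw [hsqrt]; ring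
      _ = _ := by rw [Real.mul_self_sqrt n.cast_nonneg]
  unfold psiStar
  gcongr ?_ + _
  exact min_le_of_right_le (min_le_of_left_le hmid)

theorem psi01_ge {a : ℝ} (ha : 0 ≤ a) (hθ : ∀ j, θ j ≠ 0 → a / Real.sqrt n ≤ |θ j|) :
    2 * Real.log n * ((min (a ^ 2) 1 * (univ.filter fun j => θ j ≠ 0).card + 1) / n)
      ≤ psi01 θ := by
  have hsq : ∀ j, θ j ≠ 0 → a ^ 2 / n ≤ θ j ^ 2 := fun j hj => by
    have := pow_le_pow_left₀ (by positivity) (hθ j hj) 2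
    rwa [div_pow, sq_abs, Real.sq_sqrt n.cast_nonneg] at this
  have hsum := card_support_mul_le_sum_min θ (t := 1 / n) (by positivity) hsq
  rw [min_div_div_right n.cast_nonneg] at hsum
  unfold psi01
  gcongr
  rw [add_div, mul_div_right_comm, mul_comm (min (a ^ 2) 1 / n)]
  linarith

theorem mul_add_one_div_mul_add_one_le {M b c s : ℝ} (hM : 0 ≤ M) (hc : 0 < c) (hs : 1 ≤ s) :
    (M * b * s + 1) / (2 * s ^ 2 * (c * M + 1)) ≤ max (b / c) 1 / (2 * s) := by
  set K := max (b / c) 1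
  have hbK : b ≤ K * c := (div_le_iff₀ hc).mp (le_max_left _ _)
  have hMb : M * b ≤ K * (c * M) := by nlinarith
  have hnum : M * b * s + 1 ≤ K * (c * M + 1) * s := by nlinarith [le_max_right (b / c) 1]
  have hden : 0 < c * M + 1 := by positivity
  calc _ ≤ K * (c * M + 1) * s / (2 * s ^ 2 * (c * M + 1)) := by gcongr
    _ = K / (2 * s) := by field_simp

theorem psiStar_div_psi01_le {a b : ℝ} (ha : 0 < a) (hn : 1 ≤ Real.log n)
    (hθ : ∀ j, θ j ≠ 0 → a / Real.sqrt n ≤ |θ j| ∧ |θ j| ≤ b / Real.sqrt n) :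
    psiStar θ / psi01 θ ≤ max (b / min (a ^ 2) 1) 1 / (2 * Real.sqrt (Real.log n)) := by
  set M : ℝ := ((univ.filter fun j => θ j ≠ 0).card : ℝ)
  set s := Real.sqrt (Real.log n)
  have hn0 : (0 : ℝ) < n := Nat.cast_pos.mpr (Nat.pos_of_ne_zero fun h => by norm_num [h] at hn)
  have hlog : Real.log n = s ^ 2 := (Real.sq_sqrt (by linarith)).symm
  have hs : 1 ≤ s := Real.one_le_sqrt.mpr hn
  have hc : 0 < min (a ^ 2) 1 := by positivity
  have hden : 0 < 2 * Real.log n * ((min (a ^ 2) 1 * M + 1) / n) := by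
    have : 0 < min (a ^ 2) 1 * M + 1 :=
      add_pos_of_nonneg_of_pos (mul_nonneg hc.le (Nat.cast_nonneg _)) one_pos
    exact mul_pos (by linarith) (div_pos this hn0)
  have hstar := psiStar_le θ fun j hj => (hθ j hj).2
  calc psiStar θ / psi01 θ
      ≤ (M * b * s / n + 1 / n) / (2 * Real.log n * ((min (a ^ 2) 1 * M + 1) / n)) :=
        div_le_div₀ ((psiStar_nonneg θ).trans hstar) hstar hden
          (psi01_ge θ ha.le fun j hj => (hθ j hj).1)
    _ = (M * b * s + 1) / (2 * s ^ 2 * (min (a ^ 2) 1 * M + 1)) := by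
        rw [hlog]; field_simp
    _ ≤ _ := mul_add_one_div_mul_add_one_le (Nat.cast_nonneg _) hc hs

end Ratio

theorem tendsto_const_div_sqrt_log_atTop (K : ℝ) :
    Tendsto (fun n : ℕ => K / (2 * Real.sqrt (Real.log n))) atTop (𝓝 0) :=
  tendsto_const_nhds.div_atTop <| (Real.tendsto_sqrt_atTop.comp <|
    Real.tendsto_log_atTop.comp tendsto_natCast_atTop_atTop).const_mul_atTop two_pos

theorem stmt_11_general (a b : ℝ) (ha : 0 < a) :
    ∀ ε : ℝ, 0 < ε → ∃ N : ℕ, ∀ n : ℕ, N ≤ n → ∀ θ : Fin n → ℝ,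
      (∀ j, θ j ≠ 0 → a / Real.sqrt n ≤ |θ j| ∧ |θ j| ≤ b / Real.sqrt n) →
      (min (((Finset.univ.filter fun j => θ j ≠ 0).card : ℝ) * Real.log n / n)
          (min ((∑ j, |θ j|) * Real.sqrt (Real.log n / n)) ((∑ j, |θ j|) ^ 2))
        + 1 / n) /
        (2 * Real.log n * (1 / n + ∑ i, min ((θ i) ^ 2) (1 / n))) ≤ ε := by
  intro ε hε
  have hlog : ∀ᶠ n : ℕ in atTop, 1 ≤ Real.log n :=
    (Real.tendsto_log_atTop.comp tendsto_natCast_atTop_atTop).eventually_ge_atTop 1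
  have hsmall := (tendsto_const_div_sqrt_log_atTop (max (b / min (a ^ 2) 1) 1)).eventually
    (ge_mem_nhds hε)
  obtain ⟨N, hN⟩ := eventually_atTop.mp (hlog.and hsmall)
  exact ⟨N, fun n hn θ hθ => (psiStar_div_psi01_le θ ha (hN n hn).1 hθ).trans (hN n hn).2⟩

/-- With `ψ*_n(θ) = min(M(θ)log n/n, |θ|₁√(log n/n), |θ|₁²) + 1/n` and
`ψ⁰¹_n(θ) = 2 log n (1/n + ∑ᵢ min(θᵢ², 1/n))`, for fixed `0 < a < b`,
`sup_{θ ∈ Θ_n} ψ*_n(θ)/ψ⁰¹_n(θ) → 0` where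
`Θ_n = {θ : a/√n ≤ |θ_j| ≤ b/√n for all j with θ_j ≠ 0}`. -/
theorem stmt_11 (a b : ℝ) (ha : 0 < a) (hab : a < b) :
    ∀ ε : ℝ, 0 < ε → ∃ N : ℕ, ∀ n : ℕ, N ≤ n → ∀ θ : Fin n → ℝ,
      (∀ j, θ j ≠ 0 → a / Real.sqrt n ≤ |θ j| ∧ |θ j| ≤ b / Real.sqrt n) →
      (min (((Finset.univ.filter fun j => θ j ≠ 0).card : ℝ) * Real.log n / n)
          (min ((∑ j, |θ j|) * Real.sqrt (Real.log n / n)) ((∑ j, |θ j|) ^ 2))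
        + 1 / n) /
        (2 * Real.log n * (1 / n + ∑ i, min ((θ i) ^ 2) (1 / n))) ≤ ε :=
  stmt_11_general a b ha
end

section
/- Let X be an n×M matrix with columns of empirical norm at most 1 (i.e., (1/n)∑_i X_{ij}² ≤ 1 for each j), let f ∈ ℝⁿ and Y = f + ξ. Let λ > 0 and let θ̂ minimize (1/n)|Y - Xθ|₂² + λ|θ|₁ over ℝ^M. On the event A = { |(2/n)Xᵀξ|_∞ ≤ λ }, one has for every θ ∈ ℝ^M: (1/n)|Xθ̂ - f|₂² ≤ (1/n)|Xθ - f|₂² + 2λ|θ|₁. -/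
open Finset Matrix

/-!
Expanding `|Y - Xθ|₂² = |Xθ - f|₂² - 2⟨Xθ - f, ξ⟩ + |ξ|₂²` and comparing the objective at `θ̂` and
at `θ`, the noise energy `|ξ|₂²` cancels and the cross terms differ by
`⟨θ̂ - θ, (2/n) Xᵀξ⟩ ≤ λ|θ̂ - θ|₁ ≤ λ(|θ̂|₁ + |θ|₁)` on the event `A`; the `λ|θ̂|₁` of the penalty
absorbs the first summand.
-/

variable {ι κ : Type*} [Fintype ι] [Fintype κ]

theorem sum_sq_add_sub_eq (f ξ g : ι → ℝ) :
    ∑ i, (f i + ξ i - g i) ^ 2 =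
      ∑ i, (g i - f i) ^ 2 - 2 * ∑ i, (g i - f i) * ξ i + ∑ i, ξ i ^ 2 := by
  rw [mul_sum, ← sum_sub_distrib, ← sum_add_distrib]
  exact sum_congr rfl fun i _ => by ring

theorem sum_mul_le_mul_sum_abs {a b : κ → ℝ} {c : ℝ} (hb : ∀ j, |b j| ≤ c) :
    ∑ j, a j * b j ≤ c * ∑ j, |a j| := by
  rw [mul_sum]
  refine sum_le_sum fun j _ => ?_
  calc a j * b j ≤ |a j| * |b j| := (le_abs_self _).trans (abs_mul _ _).le
    _ ≤ |a j| * c := mul_le_mul_of_nonneg_left (hb j) (abs_nonneg _)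
    _ = c * |a j| := mul_comm _ _

theorem sum_mulVec_sub_mul_sub_sum_mulVec_sub_mul (X : Matrix ι κ ℝ) (u v : κ → ℝ)
    (f ξ : ι → ℝ) :
    ∑ i, ((X *ᵥ u) i - f i) * ξ i - ∑ i, ((X *ᵥ v) i - f i) * ξ i =
      ∑ j, (u j - v j) * ∑ i, X i j * ξ i := by
  have hdiff : ∑ i, ((X *ᵥ u) i - f i) * ξ i - ∑ i, ((X *ᵥ v) i - f i) * ξ i =
      ξ ⬝ᵥ (X *ᵥ (u - v)) := by
    rw [mulVec_sub, dotProduct, ← sum_sub_distrib]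
    exact sum_congr rfl fun i _ => by simp only [Pi.sub_apply]; ring
  rw [hdiff, dotProduct_mulVec, dotProduct]
  refine sum_congr rfl fun j _ => ?_
  simp only [vecMul, dotProduct, Pi.sub_apply, mul_comm (ξ _)]
  ring

theorem stmt_12_general (n M : ℕ) (X : Matrix (Fin n) (Fin M) ℝ)
    (f ξ Y : Fin n → ℝ) (hY : Y = f + ξ)
    (lam : ℝ) (θhat : Fin M → ℝ)
    (hmin : ∀ θ : Fin M → ℝ,
      (1 / n : ℝ) * ∑ i, (Y i - X.mulVec θhat i) ^ 2 + lam * ∑ j, |θhat j| ≤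
        (1 / n : ℝ) * ∑ i, (Y i - X.mulVec θ i) ^ 2 + lam * ∑ j, |θ j|)
    (hA : ∀ j, |(2 / n : ℝ) * ∑ i, X i j * ξ i| ≤ lam) :
    ∀ θ : Fin M → ℝ,
      (1 / n : ℝ) * ∑ i, (X.mulVec θhat i - f i) ^ 2 ≤
        (1 / n : ℝ) * ∑ i, (X.mulVec θ i - f i) ^ 2 + 2 * lam * ∑ j, |θ j| := by
  intro θ
  have hbasic := hmin θ
  simp only [hY, Pi.add_apply, sum_sq_add_sub_eq] at hbasic
  have hcross : (2 / n : ℝ) * (∑ i, (X.mulVec θhat i - f i) * ξ i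
      - ∑ i, (X.mulVec θ i - f i) * ξ i) ≤ lam * ∑ j, |θhat j - θ j| := by
    rw [sum_mulVec_sub_mul_sub_sum_mulVec_sub_mul, mul_sum]
    simp only [mul_left_comm (2 / n : ℝ)]
    exact sum_mul_le_mul_sum_abs hA
  have htriangle : lam * ∑ j, |θhat j - θ j| ≤ lam * ∑ j, |θhat j| + lam * ∑ j, |θ j| := by
    rw [← mul_add, ← sum_add_distrib, mul_sum, mul_sum]
    exact sum_le_sum fun j _ =>
      mul_le_mul_of_nonneg_left (abs_sub _ _) ((abs_nonneg _).trans (hA j))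
  linear_combination hbasic + hcross + htriangle

/-- Deterministic oracle inequality for the Lasso: if `θ̂` minimizes
`(1/n)|Y-Xθ|₂² + λ|θ|₁` with `Y = f + ξ`, then on the event
`|(2/n)Xᵀξ|_∞ ≤ λ`, for every `θ`,
`(1/n)|Xθ̂-f|₂² ≤ (1/n)|Xθ-f|₂² + 2λ|θ|₁`. -/
theorem stmt_12 (n M : ℕ) (hn : 1 ≤ n) (X : Matrix (Fin n) (Fin M) ℝ)
    (hX : ∀ j, (1 / n : ℝ) * ∑ i, X i j ^ 2 ≤ 1)
    (f ξ Y : Fin n → ℝ) (hY : Y = f + ξ)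
    (lam : ℝ) (hlam : 0 < lam) (θhat : Fin M → ℝ)
    (hmin : ∀ θ : Fin M → ℝ,
      (1 / n : ℝ) * ∑ i, (Y i - X.mulVec θhat i) ^ 2 + lam * ∑ j, |θhat j| ≤
        (1 / n : ℝ) * ∑ i, (Y i - X.mulVec θ i) ^ 2 + lam * ∑ j, |θ j|)
    (hA : ∀ j, |(2 / n : ℝ) * ∑ i, X i j * ξ i| ≤ lam) :
    ∀ θ : Fin M → ℝ,
      (1 / n : ℝ) * ∑ i, (X.mulVec θhat i - f i) ^ 2 ≤
        (1 / n : ℝ) * ∑ i, (X.mulVec θ i - f i) ^ 2 + 2 * lam * ∑ j, |θ j| :=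
  stmt_12_general n M X f ξ Y hY lam θhat hmin hA
end

section
/- Let (Θ, d) be as follows: Θ = ℝ^M, and for a probability measure π on the finite set P = {0,1}^M and estimators θ̂_p ∈ ℝ^M indexed by p ∈ P, with Y_i = η(x_i) + ξ_i, ξ_i i.i.d. N(0,σ²), define the exponentially weighted aggregate θ̃ = ∑_p θ̂_p w_p / ∑_p w_p with weights w_p = exp(-(1/(4σ²))∑_i (Y_i - f_{θ̂_p}(x_i))² - |p|/2)·π_p. Suppose (Leung–Barron inequality) E‖f_{θ̃} - η‖² ≤ min_{p : π_p ≠ 0} { E‖f_{θ̂_p} - η‖² + (4σ²/n)log(π_p⁻¹) }, and suppose each least squares estimator satisfies E‖f_{θ̂_p} - η‖² ≤ min_{θ ∈ ℝ^p}‖f_θ - η‖² + σ²(|p| ∧ R)/n, and the prior satisfies (4σ²/n)log(π_p⁻¹) ≤ (8σ²|p|/n)log(1 + eM/(|p|∨1)) + (8σ²/n)log2 for |p| < R, and π assigns mass 1/2 to p = (1,...,1). Then E‖f_{θ̃} - η‖² ≤ min_{θ ∈ ℝ^M}{ ‖f_θ - η‖² + min( σ²R/n, 9σ²M(θ)/n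 · log(1 + eM/(M(θ)∨1)) ) } + (8σ²/n)log2. -/
/-!
The aggregate competes with every pattern of positive prior mass. Against the full pattern (least
squares excess risk `σ²R/n`, prior cost `(4σ²/n) log 2`) it pays `σ²R/n`. Against the support
pattern of `θ`, of size `k < R`, it pays `σ²k/n + (8σ²k/n) L(k)` with `L(k) = log (1 + eM/k) ≥ 1`,
and `k ≤ k L(k)` absorbs the first term. When `k ≥ R`, the same inequality makes the second term of
the minimum dominate the first.
-/

open Finset

theorem one_le_log_one_add_exp_one_mul_div_max {s m : ℝ} (hs : s ≤ m) (hm : 1 ≤ m) :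
    1 ≤ Real.log (1 + Real.exp 1 * m / max s 1) := by
  have hmax : 0 < max s 1 := lt_of_lt_of_le one_pos (le_max_right _ _)
  have hratio : Real.exp 1 ≤ Real.exp 1 * m / max s 1 := by
    rw [le_div_iff₀ hmax]
    exact mul_le_mul_of_nonneg_left (max_le hs hm) (Real.exp_pos 1).le
  rw [Real.le_log_iff_exp_le (by positivity)]
  linarith

theorem natCast_le_mul_log_one_add_exp_one_mul_div_max {s M : ℕ} (hs : s ≤ M) :
    (s : ℝ) ≤ s * Real.log (1 + Real.exp 1 * M / max (s : ℝ) 1) := by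
  rcases Nat.eq_zero_or_pos s with rfl | hs0
  · simp
  · have hL := one_le_log_one_add_exp_one_mul_div_max (s := s) (m := M) (by exact_mod_cast hs)
      (by exact_mod_cast hs0.trans_le hs)
    nlinarith

section OracleInequality

variable {ι : Type*} [Fintype ι] {n R : ℕ} {σ ES : ℝ} {LS π : (ι → Bool) → ℝ}
  {r : (ι → ℝ) → ℝ}

theorem le_add_of_full_pattern (hR : R ≤ Fintype.card ι)
    (h1 : ∀ p, π p ≠ 0 → ES ≤ LS p + 4 * σ ^ 2 / n * Real.log (π p)⁻¹)
    (h2 : ∀ p θ, (∀ j, p j = false → θ j = 0) →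
      LS p ≤ r θ + σ ^ 2 * (min #{j | p j = true} R : ℕ) / n)
    (hπ : π (fun _ => true) = 1 / 2) (θ : ι → ℝ) :
    ES ≤ r θ + σ ^ 2 * R / n + 8 * σ ^ 2 / n * Real.log 2 := by
  have hES := h1 (fun _ => true) (by norm_num [hπ])
  have hLS := h2 (fun _ => true) θ (by simp)
  rw [filter_true_of_mem (fun _ _ => rfl), card_univ, Nat.min_eq_right hR] at hLS
  rw [hπ, one_div, inv_inv] at hES
  have hprior : 4 * σ ^ 2 / n * Real.log 2 ≤ 8 * σ ^ 2 / n * Real.log 2 := by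
    gcongr
    norm_num
  linarith

theorem le_add_of_support_pattern {L : ℕ → ℝ}
    (h1 : ∀ p, π p ≠ 0 → ES ≤ LS p + 4 * σ ^ 2 / n * Real.log (π p)⁻¹)
    (h2 : ∀ p θ, (∀ j, p j = false → θ j = 0) →
      LS p ≤ r θ + σ ^ 2 * (min #{j | p j = true} R : ℕ) / n)
    (h3 : ∀ p, #{j | p j = true} < R →
      4 * σ ^ 2 / n * Real.log (π p)⁻¹ ≤
        8 * σ ^ 2 * (#{j | p j = true} : ℝ) / n * L #{j | p j = true} +
          8 * σ ^ 2 / n * Real.log 2)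
    (h5 : ∀ p, #{j | p j = true} < R → π p ≠ 0)
    {θ : ι → ℝ} (hθR : #{j | θ j ≠ 0} < R)
    (hL : (#{j | θ j ≠ 0} : ℝ) ≤ #{j | θ j ≠ 0} * L #{j | θ j ≠ 0}) :
    ES ≤ r θ + 9 * σ ^ 2 * (#{j | θ j ≠ 0} : ℝ) / n * L #{j | θ j ≠ 0} +
      8 * σ ^ 2 / n * Real.log 2 := by
  set k := #{j | θ j ≠ 0}
  let p : ι → Bool := fun j => decide (θ j ≠ 0)
  have hp : #{j | p j = true} = k := by simp [p, k]
  have hES := h1 p (h5 p (hp ▸ hθR))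
  have hLS := h2 p θ (by simp [p])
  have hprior := h3 p (hp ▸ hθR)
  rw [hp, Nat.min_eq_left hθR.le] at hLS
  rw [hp] at hprior
  have hk : σ ^ 2 * k / n ≤ σ ^ 2 * k / n * L k := by
    have := mul_le_mul_of_nonneg_left hL (by positivity : 0 ≤ σ ^ 2 / n)
    calc σ ^ 2 * k / n = σ ^ 2 / n * k := by ring
      _ ≤ σ ^ 2 / n * (k * L k) := this
      _ = σ ^ 2 * k / n * L k := by ring
  linarith [show 9 * σ ^ 2 * k / n * L k = σ ^ 2 * k / n * L k + 8 * σ ^ 2 * k / n * L k by ring]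

theorem le_add_min_of_oracle_inequality {L : ℕ → ℝ} (hR : R ≤ Fintype.card ι)
    (h1 : ∀ p, π p ≠ 0 → ES ≤ LS p + 4 * σ ^ 2 / n * Real.log (π p)⁻¹)
    (h2 : ∀ p θ, (∀ j, p j = false → θ j = 0) →
      LS p ≤ r θ + σ ^ 2 * (min #{j | p j = true} R : ℕ) / n)
    (h3 : ∀ p, #{j | p j = true} < R →
      4 * σ ^ 2 / n * Real.log (π p)⁻¹ ≤
        8 * σ ^ 2 * (#{j | p j = true} : ℝ) / n * L #{j | p j = true} +
          8 * σ ^ 2 / n * Real.log 2)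
    (h5 : ∀ p, #{j | p j = true} < R → π p ≠ 0) (hπ : π (fun _ => true) = 1 / 2)
    (θ : ι → ℝ) (hL : (#{j | θ j ≠ 0} : ℝ) ≤ #{j | θ j ≠ 0} * L #{j | θ j ≠ 0}) :
    ES ≤ r θ +
        min (σ ^ 2 * R / n) (9 * σ ^ 2 * (#{j | θ j ≠ 0} : ℝ) / n * L #{j | θ j ≠ 0}) +
      8 * σ ^ 2 / n * Real.log 2 := by
  set k := #{j | θ j ≠ 0}
  have hfull := le_add_of_full_pattern hR h1 h2 hπ θ
  rcases lt_or_ge k R with hkR | hRk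
  · have hsupp := le_add_of_support_pattern h1 h2 h3 h5 hkR hL
    rcases min_choice (σ ^ 2 * R / n) (9 * σ ^ 2 * k / n * L k) with h | h <;> rw [h] <;> linarith
  · have hmin : σ ^ 2 * R / n ≤ 9 * σ ^ 2 * k / n * L k := by
      have hRk : (R : ℝ) ≤ k := by exact_mod_cast hRk
      have hkL : (R : ℝ) ≤ 9 * (k * L k) := by
        linarith [hRk.trans hL, (Nat.cast_nonneg k).trans hL]
      calc σ ^ 2 * R / n = σ ^ 2 / n * R := by ring
        _ ≤ σ ^ 2 / n * (9 * (k * L k)) := by gcongr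
        _ = 9 * σ ^ 2 * k / n * L k := by ring
    rw [min_eq_left hmin]
    exact hfull

end OracleInequality

theorem stmt_18_general (n M : ℕ)
    (F : Fin M → Fin n → ℝ) (η : Fin n → ℝ) (σ : ℝ)
    (R : ℕ) (hR : R = (Matrix.of fun i j => F j i : Matrix (Fin n) (Fin M) ℝ).rank)
    (ES : ℝ) (LS : (Fin M → Bool) → ℝ) (π : (Fin M → Bool) → ℝ)
    -- Leung–Barron oracle inequality
    (h1 : ∀ p : Fin M → Bool, π p ≠ 0 →
      ES ≤ LS p + 4 * σ ^ 2 / n * Real.log (π p)⁻¹)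
    -- risk bound for each least squares estimator
    (h2 : ∀ p : Fin M → Bool, ∀ θ : Fin M → ℝ, (∀ j, p j = false → θ j = 0) →
      LS p ≤ (1 / n : ℝ) * ∑ i, ((∑ j, θ j * F j i) - η i) ^ 2 +
        σ ^ 2 * (min ((Finset.univ.filter fun j => p j = true).card) R : ℕ) / n)
    -- prior remainder bound for small patterns
    (h3 : ∀ p : Fin M → Bool, (Finset.univ.filter fun j => p j = true).card < R →
      4 * σ ^ 2 / n * Real.log (π p)⁻¹ ≤
        8 * σ ^ 2 * ((Finset.univ.filter fun j => p j = true).card : ℝ) / n *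
            Real.log (1 + Real.exp 1 * M /
              (max ((Finset.univ.filter fun j => p j = true).card : ℝ) 1)) +
          8 * σ ^ 2 / n * Real.log 2)
    -- nonvanishing prior on small patterns and mass 1/2 on the full pattern
    (h5 : ∀ p : Fin M → Bool,
      (Finset.univ.filter fun j => p j = true).card < R → π p ≠ 0)
    (h4 : π (fun _ => true) = 1 / 2) :
    ES ≤ (⨅ θ : Fin M → ℝ,
        (1 / n : ℝ) * ∑ i, ((∑ j, θ j * F j i) - η i) ^ 2 +
          min (σ ^ 2 * R / n)
            (9 * σ ^ 2 * ((Finset.univ.filter fun j => θ j ≠ 0).card : ℝ) / n *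
              Real.log (1 + Real.exp 1 * M /
                (max ((Finset.univ.filter fun j => θ j ≠ 0).card : ℝ) 1)))) +
      8 * σ ^ 2 / n * Real.log 2 := by
  have hRM : R ≤ Fintype.card (Fin M) := hR ▸ Matrix.rank_le_card_width _
  refine sub_le_iff_le_add.mp (le_ciInf fun θ => sub_le_iff_le_add.mpr ?_)
  have hsupp : #{j | θ j ≠ 0} ≤ M := (card_filter_le _ _).trans_eq (card_fin M)
  exact le_add_min_of_oracle_inequality
    (L := fun s => Real.log (1 + Real.exp 1 * M / max (s : ℝ) 1)) hRM h1 h2 h3 h5 h4 θ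
    (natCast_le_mul_log_one_add_exp_one_mul_div_max hsupp)

/-- Theorem 1 of the paper (conditional form): if the aggregate risk `ES`
satisfies the Leung–Barron inequality with prior `π`, each least squares risk
`LS p` satisfies the Pythagorean bound, the prior remainder satisfies the
Exponential Screening bound for `|p| < R`, and `π` puts mass `1/2` (in
particular nonzero mass) on the all-ones pattern, then
`ES ≤ min_θ {‖f_θ-η‖² + min(σ²R/n, 9σ²M(θ)/n·log(1+eM/(M(θ)∨1)))} + (8σ²/n)log 2`. -/
theorem stmt_18 (n M : ℕ) (hn : 1 ≤ n) (hM : 1 ≤ M)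
    (F : Fin M → Fin n → ℝ) (η : Fin n → ℝ) (σ : ℝ) (hσ : 0 < σ)
    (R : ℕ) (hR : R = (Matrix.of fun i j => F j i : Matrix (Fin n) (Fin M) ℝ).rank)
    (ES : ℝ) (LS : (Fin M → Bool) → ℝ) (π : (Fin M → Bool) → ℝ)
    -- Leung–Barron oracle inequality
    (h1 : ∀ p : Fin M → Bool, π p ≠ 0 →
      ES ≤ LS p + 4 * σ ^ 2 / n * Real.log (π p)⁻¹)
    -- risk bound for each least squares estimator
    (h2 : ∀ p : Fin M → Bool, ∀ θ : Fin M → ℝ, (∀ j, p j = false → θ j = 0) →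
      LS p ≤ (1 / n : ℝ) * ∑ i, ((∑ j, θ j * F j i) - η i) ^ 2 +
        σ ^ 2 * (min ((Finset.univ.filter fun j => p j = true).card) R : ℕ) / n)
    -- prior remainder bound for small patterns
    (h3 : ∀ p : Fin M → Bool, (Finset.univ.filter fun j => p j = true).card < R →
      4 * σ ^ 2 / n * Real.log (π p)⁻¹ ≤
        8 * σ ^ 2 * ((Finset.univ.filter fun j => p j = true).card : ℝ) / n *
            Real.log (1 + Real.exp 1 * M /
              (max ((Finset.univ.filter fun j => p j = true).card : ℝ) 1)) +
          8 * σ ^ 2 / n * Real.log 2)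
    -- nonvanishing prior on small patterns and mass 1/2 on the full pattern
    (h5 : ∀ p : Fin M → Bool,
      (Finset.univ.filter fun j => p j = true).card < R → π p ≠ 0)
    (h4 : π (fun _ => true) = 1 / 2) :
    ES ≤ (⨅ θ : Fin M → ℝ,
        (1 / n : ℝ) * ∑ i, ((∑ j, θ j * F j i) - η i) ^ 2 +
          min (σ ^ 2 * R / n)
            (9 * σ ^ 2 * ((Finset.univ.filter fun j => θ j ≠ 0).card : ℝ) / n *
              Real.log (1 + Real.exp 1 * M /
                (max ((Finset.univ.filter fun j => θ j ≠ 0).card : ℝ) 1)))) +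
      8 * σ ^ 2 / n * Real.log 2 :=
  stmt_18_general n M F η σ R hR ES LS π h1 h2 h3 h5 h4
end
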